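/- arXiv:1604.08445 — 12 statements merged into one kernel-verified Lean document; each statement's English description precedes it below -/
import Mathlib

section
/- If f : (0,∞) → ℝ is (s,m)-convex in the second sense and non-decreasing, then f is harmonically (s,m)-convex in the second sense. -/
theorem sm_convex_nondecreasing_implies_harmonically_sm_convex
    (s m : ℝ) (hs : s ∈ Set.Ioc (0:ℝ) 1) (hm : m ∈ Set.Ioc (0:ℝ) 1)
    (f : ℝ → ℝ)
    (hmono : ∀ x y : ℝ, 0 < x → 0 < y → x ≤ y → f x ≤ f y)
    (hconv : ∀ x y t : ℝ, 0 < x → 0 < y → t ∈ Set.Icc (0:ℝ) 1 →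
      f (t * x + m * (1 - t) * y) ≤ t ^ s * f x + m * (1 - t) ^ s * f y) :
    ∀ x y t : ℝ, 0 < x → 0 < y → t ∈ Set.Icc (0:ℝ) 1 →
      f (m * x * y / (m * t * y + (1 - t) * x)) ≤ t ^ s * f x + m * (1 - t) ^ s * f y := by
  intro x y t hx hy ht
  obtain ⟨ht0, ht1⟩ := ht
  obtain ⟨hm0, hm1⟩ := hm
  have hden : 0 < m * t * y + (1 - t) * x := by
    rcases eq_or_lt_of_le ht0 with h | h
    · rw [← h]; simpa using hx
    · have h1 : 0 < m * t * y := by positivity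
      nlinarith [mul_nonneg (sub_nonneg.mpr ht1) hx.le]
  have hq : m * x * y / (m * t * y + (1 - t) * x) ≤ t * x + m * (1 - t) * y := by
    rw [div_le_iff₀ hden]
    nlinarith [mul_nonneg (mul_nonneg ht0 (sub_nonneg.mpr ht1)) (sq_nonneg (x - m * y)),
      sq_nonneg (t - 1/2)]
  have hqpos : 0 < m * x * y / (m * t * y + (1 - t) * x) := by positivity
  have hle : f (m * x * y / (m * t * y + (1 - t) * x)) ≤ f (t * x + m * (1 - t) * y) :=
    hmono _ _ hqpos (lt_of_lt_of_le hqpos hq) hq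
  exact hle.trans (hconv x y t hx hy ⟨ht0, ht1⟩)
end

section
/- If f : (0,∞) → ℝ is harmonically (s,m)-convex in the second sense and non-increasing, then f is (s,m)-convex in the second sense. -/
theorem harmonically_sm_convex_nonincreasing_implies_sm_convex
    (s m : ℝ) (hs : s ∈ Set.Ioc (0:ℝ) 1) (hm : m ∈ Set.Ioc (0:ℝ) 1)
    (f : ℝ → ℝ)
    (hmono : ∀ x y : ℝ, 0 < x → 0 < y → x ≤ y → f y ≤ f x)
    (hconv : ∀ x y t : ℝ, 0 < x → 0 < y → t ∈ Set.Icc (0:ℝ) 1 →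
      f (m * x * y / (m * t * y + (1 - t) * x)) ≤ t ^ s * f x + m * (1 - t) ^ s * f y) :
    ∀ x y t : ℝ, 0 < x → 0 < y → t ∈ Set.Icc (0:ℝ) 1 →
      f (t * x + m * (1 - t) * y) ≤ t ^ s * f x + m * (1 - t) ^ s * f y := by
  intro x y t hx hy ht
  obtain ⟨ht0, ht1⟩ := ht
  have hm0 := hm.1
  have hD : 0 < m * t * y + (1 - t) * x := by
    rcases eq_or_lt_of_le ht1 with h | h
    · subst h; nlinarith [mul_pos hm0 hy, hx]
    · have : 0 < (1 - t) * x := mul_pos (by linarith) hx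
      nlinarith [mul_nonneg (mul_nonneg hm0.le ht0) hy.le]
  have hA : 0 < t * x + m * (1 - t) * y := by
    rcases eq_or_lt_of_le ht1 with h | h
    · subst h; nlinarith [mul_pos hm0 hy, hx]
    · have : 0 < m * (1 - t) * y := mul_pos (mul_pos hm0 (by linarith)) hy
      nlinarith [mul_nonneg ht0 hx.le]
  have hH : 0 < m * x * y / (m * t * y + (1 - t) * x) := by positivity
  have hle : m * x * y / (m * t * y + (1 - t) * x) ≤ t * x + m * (1 - t) * y := by
    rw [div_le_iff₀ hD]
    nlinarith [mul_nonneg (mul_nonneg ht0 (sub_nonneg.2 ht1)) (sq_nonneg (x - m * y))]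
  exact le_trans (hmono _ _ hH hA hle) (hconv x y t hx hy ⟨ht0, ht1⟩)
end

section
/- Let 0 < s < 1 and a, b, c ∈ ℝ with b ≥ 0 and 0 ≤ c ≤ a. The function f : [0,∞) → ℝ defined by f(0) = a and f(x) = b x^s + c for x > 0 is harmonically (s,1)-convex in the second sense on (0,∞). -/
lemma real_rpow_add_le_add_rpow (a b p : ℝ) (ha : 0 ≤ a) (hb : 0 ≤ b)
    (hp : 0 ≤ p) (hp1 : p ≤ 1) : (a + b) ^ p ≤ a ^ p + b ^ p := by
  lift a to NNReal using ha
  lift b to NNReal using hb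
  exact_mod_cast NNReal.rpow_add_le_add_rpow a b hp hp1

theorem piecewise_power_harmonically_s_convex
    (s a b c : ℝ) (hs : 0 < s) (hs1 : s < 1) (hb : 0 ≤ b) (hc : 0 ≤ c) (hca : c ≤ a)
    (f : ℝ → ℝ) (hf : ∀ x : ℝ, f x = if x = 0 then a else b * x ^ s + c) :
    ∀ x y t : ℝ, 0 < x → 0 < y → t ∈ Set.Icc (0:ℝ) 1 →
      f (x * y / (t * y + (1 - t) * x)) ≤ t ^ s * f x + (1 - t) ^ s * f y := by
  intro x y t hx hy ht
  obtain ⟨ht0, ht1⟩ := ht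
  have hD : 0 < t * y + (1 - t) * x := by
    rcases eq_or_lt_of_le ht0 with h | h
    · simpa [← h] using hx
    · nlinarith [mul_pos h hy, mul_nonneg (by linarith : (0:ℝ) ≤ 1 - t) hx.le]
  have harg : 0 < x * y / (t * y + (1 - t) * x) := by positivity
  rw [hf, hf, hf, if_neg harg.ne', if_neg hx.ne', if_neg hy.ne']
  have h1 : x * y / (t * y + (1 - t) * x) ≤ t * x + (1 - t) * y := by
    rw [div_le_iff₀ hD]
    nlinarith [sq_nonneg (x - y), mul_nonneg (mul_nonneg ht0 (by linarith : (0:ℝ) ≤ 1 - t)) (sq_nonneg (x - y))]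
  have h2 : (x * y / (t * y + (1 - t) * x)) ^ s ≤ (t * x + (1 - t) * y) ^ s :=
    Real.rpow_le_rpow harg.le h1 hs.le
  have h3 : (t * x + (1 - t) * y) ^ s ≤ (t * x) ^ s + ((1 - t) * y) ^ s :=
    real_rpow_add_le_add_rpow _ _ _ (by positivity) (by nlinarith) hs.le hs1.le
  have h4 : (t * x) ^ s = t ^ s * x ^ s := Real.mul_rpow ht0 hx.le
  have h5 : ((1 - t) * y) ^ s = (1 - t) ^ s * y ^ s := Real.mul_rpow (by linarith) hy.le
  have hts : t ≤ t ^ s := by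
    rcases eq_or_lt_of_le ht0 with h | h
    · simp [← h, Real.zero_rpow hs.ne']
    · calc t = t ^ (1:ℝ) := (Real.rpow_one t).symm
        _ ≤ t ^ s := Real.rpow_le_rpow_of_exponent_ge h ht1 hs1.le
  have hts' : 1 - t ≤ (1 - t) ^ s := by
    rcases eq_or_lt_of_le (by linarith : (0:ℝ) ≤ 1 - t) with h | h
    · simp [← h, Real.zero_rpow hs.ne']
    · calc 1 - t = (1 - t) ^ (1:ℝ) := (Real.rpow_one _).symm
        _ ≤ (1 - t) ^ s := Real.rpow_le_rpow_of_exponent_ge h (by linarith) hs1.le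
  have hxs : 0 ≤ x ^ s := Real.rpow_nonneg hx.le s
  have hys : 0 ≤ y ^ s := Real.rpow_nonneg hy.le s
  have hbs : b * (x * y / (t * y + (1 - t) * x)) ^ s ≤ b * (t ^ s * x ^ s + (1 - t) ^ s * y ^ s) := by
    apply mul_le_mul_of_nonneg_left _ hb
    calc (x * y / (t * y + (1 - t) * x)) ^ s ≤ (t * x + (1 - t) * y) ^ s := h2
      _ ≤ (t * x) ^ s + ((1 - t) * y) ^ s := h3
      _ = t ^ s * x ^ s + (1 - t) ^ s * y ^ s := by rw [h4, h5]
  nlinarith [mul_nonneg hb hxs, mul_nonneg hb hys]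
end

section
/- Let f : I ⊂ (0,∞) → ℝ be harmonically (s,m)-convex in the second sense with s ∈ (0,1], m ∈ (0,1], and let 0 < a < b with a, b and b/m, a/m in the domain, f integrable on [a,b]. Then (ab/(b-a)) ∫_a^b f(x)/x² dx ≤ min{ (f(a) + m f(b/m))/(s+1), (f(b) + m f(a/m))/(s+1) }. -/
open MeasureTheory intervalIntegral

theorem hermite_hadamard_harmonically_sm_convex
    (I : Set ℝ) (hI : I ⊆ Set.Ioi 0)
    (s m a b : ℝ) (hs : s ∈ Set.Ioc (0:ℝ) 1) (hm : m ∈ Set.Ioc (0:ℝ) 1)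
    (ha : 0 < a) (hab : a < b)
    (f : ℝ → ℝ)
    (haI : a ∈ I) (hbI : b ∈ I) (hbmI : b / m ∈ I) (hamI : a / m ∈ I)
    (hconv : ∀ x ∈ I, ∀ y ∈ I, ∀ t ∈ Set.Icc (0:ℝ) 1,
      f (m * x * y / (m * t * y + (1 - t) * x)) ≤ t ^ s * f x + m * (1 - t) ^ s * f y)
    (hint : IntervalIntegrable f volume a b) :
    a * b / (b - a) * ∫ x in a..b, f x / x ^ 2 ≤
      min ((f a + m * f (b / m)) / (s + 1)) ((f b + m * f (a / m)) / (s + 1)) := by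
  obtain ⟨hs0, hs1⟩ := hs
  obtain ⟨hm0, hm1⟩ := hm
  have hb : 0 < b := ha.trans hab
  have hba : 0 < b - a := sub_pos.2 hab
  set φ : ℝ → ℝ := fun t => a * b / (t * b + (1 - t) * a) with hφdef
  set φ' : ℝ → ℝ := fun t => -(a * b * (b - a)) / (t * b + (1 - t) * a) ^ 2 with hφ'def
  have hD : ∀ t ∈ Set.Icc (0:ℝ) 1, 0 < t * b + (1 - t) * a := by
    intro t ht; nlinarith [ht.1, ht.2]
  have hDIoo : ∀ t ∈ Set.Ioo (0:ℝ) 1, 0 < t * b + (1 - t) * a := by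
    intro t ht; exact hD t ⟨ht.1.le, ht.2.le⟩
  -- derivative
  have hderiv : ∀ t ∈ Set.Ioo (0:ℝ) 1, HasDerivWithinAt φ (φ' t) (Set.Ioo 0 1) t := by
    intro t ht
    have hDt : t * b + (1 - t) * a ≠ 0 := (hDIoo t ht).ne'
    have hDd : HasDerivAt (fun t : ℝ => t * b + (1 - t) * a) (b - a) t := by
      have h1 : HasDerivAt (fun t : ℝ => t * b) b t := (hasDerivAt_id t).mul_const b |>.congr_deriv (by ring)
      have h2 : HasDerivAt (fun t : ℝ => (1 - t) * a) (-a) t :=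
        (((hasDerivAt_const t (1:ℝ)).sub (hasDerivAt_id t)).mul_const a).congr_deriv (by ring)
      exact (h1.add h2).congr_deriv (by ring)
    have := (hasDerivAt_const t (a * b)).div hDd hDt
    refine (this.congr_deriv ?_).hasDerivWithinAt
    rw [zero_mul, zero_sub]
  -- injectivity
  have hinj : Set.InjOn φ (Set.Ioo 0 1) := by
    intro t1 h1 t2 h2 h
    have hd1 := hDIoo t1 h1
    have hd2 := hDIoo t2 h2
    simp only [hφdef] at h
    rw [div_eq_div_iff hd1.ne' hd2.ne'] at h
    have hab0 : 0 < a * b := mul_pos ha hb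
    have h2' : (t2 - t1) * (b - a) * (a * b) = 0 := by linear_combination h
    have h3' : (t2 - t1) * (b - a) = 0 := by
      rcases mul_eq_zero.1 h2' with h | h
      · exact h
      · exact absurd h hab0.ne'
    rcases mul_eq_zero.1 h3' with h | h
    · linarith
    · exact absurd h hba.ne'
  -- image
  have himg : φ '' Set.Ioo 0 1 = Set.Ioo a b := by
    ext x
    constructor
    · rintro ⟨t, ht, rfl⟩
      have hd := hDIoo t ht
      constructor
      · rw [lt_div_iff₀ hd]
        nlinarith [mul_pos ha (mul_pos (sub_pos.2 ht.2) hba)]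
      · rw [div_lt_iff₀ hd]
        nlinarith [mul_pos hb (mul_pos ht.1 hba)]
    · rintro ⟨hx1, hx2⟩
      have hx0 : 0 < x := ha.trans hx1
      have hbx : 0 < b - x := sub_pos.2 hx2
      refine ⟨a * (b - x) / (x * (b - a)), ⟨?_, ?_⟩, ?_⟩
      · positivity
      · rw [div_lt_one (by positivity)]; nlinarith
      · simp only [hφdef]
        rw [div_eq_iff]
        · field_simp
          ring
        · have : a * (b - x) / (x * (b - a)) * b + (1 - a * (b - x) / (x * (b - a))) * a
              = a * b / x := by field_simp; ring
          rw [this]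
          positivity
  -- substitution
  have hsub : ∫ x in Set.Ioo a b, f x / x ^ 2 =
      ∫ t in Set.Ioo (0:ℝ) 1, |φ' t| • (f (φ t) / (φ t) ^ 2) := by
    rw [← himg, integral_image_eq_integral_abs_deriv_smul measurableSet_Ioo hderiv hinj]
  have hsimp : ∀ t ∈ Set.Ioo (0:ℝ) 1,
      |φ' t| • (f (φ t) / (φ t) ^ 2) = (b - a) / (a * b) * f (φ t) := by
    intro t ht
    have hd := hDIoo t ht
    have habs : |φ' t| = a * b * (b - a) / (t * b + (1 - t) * a) ^ 2 := by
      simp only [hφ'def]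
      rw [abs_div, abs_neg, abs_of_pos (by positivity), abs_of_pos (by positivity)]
    rw [habs]
    simp only [hφdef, smul_eq_mul]
    have hd' : b * t - t * a + a ≠ 0 := by nlinarith
    field_simp
    ring_nf
    linear_combination f (b * a * (b * t - t * a + a)⁻¹) * mul_inv_cancel₀ hd'
  have hsub2 : ∫ x in Set.Ioo a b, f x / x ^ 2 =
      (b - a) / (a * b) * ∫ t in Set.Ioo (0:ℝ) 1, f (φ t) := by
    rw [hsub, ← MeasureTheory.integral_const_mul]
    exact setIntegral_congr_fun measurableSet_Ioo hsimp
  -- integrability of f x / x^2 on Ioo a b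
  have hfIoo : IntegrableOn f (Set.Ioo a b) := (hint.1).mono_set Set.Ioo_subset_Ioc_self
  have hx2 : IntegrableOn (fun x => f x / x ^ 2) (Set.Ioo a b) := by
    have : ∀ x, f x / x ^ 2 = (x ^ 2)⁻¹ * f x := fun x => by ring
    simp only [this]
    apply Integrable.bdd_mul (c := (a ^ 2)⁻¹) hfIoo
    · exact ((continuous_pow 2).aestronglyMeasurable.aemeasurable.inv).aestronglyMeasurable.restrict
    · rw [ae_restrict_iff' measurableSet_Ioo]
      filter_upwards with x hx
      have hx0 : 0 < x := ha.trans hx.1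
      rw [Real.norm_eq_abs, abs_of_pos (inv_pos.2 (pow_pos hx0 2))]
      apply inv_anti₀ (pow_pos ha 2)
      nlinarith [hx.1]
  -- integrability of f ∘ φ on Ioo 0 1
  have hcomp : IntegrableOn (fun t => f (φ t)) (Set.Ioo (0:ℝ) 1) := by
    have h1 : IntegrableOn (fun t => |φ' t| • (f (φ t) / (φ t) ^ 2)) (Set.Ioo (0:ℝ) 1) := by
      refine (integrableOn_image_iff_integrableOn_abs_deriv_smul measurableSet_Ioo hderiv hinj
        (fun x => f x / x ^ 2)).mp ?_
      rw [himg]; exact hx2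
    have h2 : IntegrableOn (fun t => (b - a) / (a * b) * f (φ t)) (Set.Ioo (0:ℝ) 1) :=
      h1.congr_fun hsimp measurableSet_Ioo
    have h3 := h2.const_mul ((a * b) / (b - a))
    refine h3.congr (ae_of_all _ fun t => ?_)
    field_simp
  have hcompII : IntervalIntegrable (fun t => f (φ t)) volume 0 1 := by
    rw [intervalIntegrable_iff_integrableOn_Ioc_of_le zero_le_one]
    exact (integrableOn_Ioc_iff_integrableOn_Ioo (f := fun t => f (φ t))).mpr hcomp
  -- the key identity
  have key : a * b / (b - a) * ∫ x in a..b, f x / x ^ 2 = ∫ t in (0:ℝ)..1, f (φ t) := by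
    rw [integral_of_le hab.le, integral_of_le zero_le_one,
      MeasureTheory.integral_Ioc_eq_integral_Ioo, MeasureTheory.integral_Ioc_eq_integral_Ioo,
      hsub2, ← mul_assoc, show a * b / (b - a) * ((b - a) / (a * b)) = 1 by field_simp, one_mul]
  -- integral of rpow
  have hrpow : ∫ t in (0:ℝ)..1, t ^ s = 1 / (s + 1) := by
    rw [integral_rpow (Or.inl (by linarith))]
    rw [Real.one_rpow, Real.zero_rpow (by linarith)]
    norm_num
  have hrpow' : ∫ t in (0:ℝ)..1, (1 - t) ^ s = 1 / (s + 1) := by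
    have h := intervalIntegral.integral_comp_sub_left (a := (0:ℝ)) (b := 1)
      (fun u : ℝ => u ^ s) 1
    simp only [sub_self, sub_zero] at h
    rw [h, hrpow]
  have hintpow : IntervalIntegrable (fun t : ℝ => t ^ s) volume 0 1 :=
    intervalIntegral.intervalIntegrable_rpow' (by linarith)
  have hintpow' : IntervalIntegrable (fun t : ℝ => (1 - t) ^ s) volume 0 1 := by
    have h := ((intervalIntegral.intervalIntegrable_rpow' (r := s) (a := 0) (b := 1)
      (by linarith)).comp_sub_left 1).symm
    simpa using h
  -- bound 1
  have bound1 : ∫ t in (0:ℝ)..1, f (φ t) ≤ (f a + m * f (b / m)) / (s + 1) := by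
    have hub : IntervalIntegrable (fun t : ℝ => t ^ s * f a + m * (1 - t) ^ s * f (b / m))
        volume 0 1 :=
      ((hintpow.mul_const _).add ((hintpow'.const_mul m).mul_const _))
    have hmono := intervalIntegral.integral_mono_on zero_le_one hcompII hub ?_
    · calc ∫ t in (0:ℝ)..1, f (φ t) ≤ _ := hmono
        _ = (f a + m * f (b / m)) / (s + 1) := by
          rw [intervalIntegral.integral_add (hintpow.mul_const _)
            ((hintpow'.const_mul m).mul_const _), intervalIntegral.integral_mul_const,
            intervalIntegral.integral_mul_const]
          rw [intervalIntegral.integral_const_mul, hrpow, hrpow']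
          field_simp
    · intro t ht
      have h := hconv a haI (b / m) hbmI t ht
      rw [show m * a * (b / m) = a * b by field_simp,
        show m * t * (b / m) = t * b by field_simp] at h
      exact h
  -- bound 2
  have bound2 : ∫ t in (0:ℝ)..1, f (φ t) ≤ (f b + m * f (a / m)) / (s + 1) := by
    have hswap : ∫ t in (0:ℝ)..1, f (φ t) = ∫ t in (0:ℝ)..1, f (φ (1 - t)) := by
      have := intervalIntegral.integral_comp_sub_left (a := (0:ℝ)) (b := 1)
        (fun u => f (φ u)) 1
      simpa using this.symm
    rw [hswap]
    have hcompII2 : IntervalIntegrable (fun t => f (φ (1 - t))) volume 0 1 := by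
      have h := (hcompII.comp_sub_left 1).symm
      simpa using h
    have hub : IntervalIntegrable (fun t : ℝ => t ^ s * f b + m * (1 - t) ^ s * f (a / m))
        volume 0 1 :=
      ((hintpow.mul_const _).add ((hintpow'.const_mul m).mul_const _))
    have hmono := intervalIntegral.integral_mono_on zero_le_one hcompII2 hub ?_
    · calc ∫ t in (0:ℝ)..1, f (φ (1 - t)) ≤ _ := hmono
        _ = (f b + m * f (a / m)) / (s + 1) := by
          rw [intervalIntegral.integral_add (hintpow.mul_const _)
            ((hintpow'.const_mul m).mul_const _), intervalIntegral.integral_mul_const,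
            intervalIntegral.integral_mul_const]
          rw [intervalIntegral.integral_const_mul, hrpow, hrpow']
          field_simp
    · intro t ht
      have h := hconv b hbI (a / m) hamI t ht
      rw [show m * b * (a / m) = a * b by field_simp,
        show m * t * (a / m) = t * a by field_simp] at h
      have heq : a * b / (t * a + (1 - t) * b) = φ (1 - t) := by
        simp only [hφdef]
        congr 1
        ring
      rwa [heq] at h
  rw [key]
  exact le_min bound1 bound2
end

section
/- Let f : I ⊂ (0,∞) → ℝ be harmonically s-convex in the second sense with s ∈ (0,1], and 0 < a < b with [a,b] ⊂ I, f integrable on [a,b]. Then (ab/(b-a)) ∫_a^b f(x)/x² dx ≤ (f(a) + f(b))/(s+1). -/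
open MeasureTheory intervalIntegral

theorem hermite_hadamard_harmonically_s_convex
    (I : Set ℝ) (hI : I ⊆ Set.Ioi 0)
    (s a b : ℝ) (hs : s ∈ Set.Ioc (0:ℝ) 1)
    (ha : 0 < a) (hab : a < b) (habI : Set.Icc a b ⊆ I)
    (f : ℝ → ℝ)
    (hconv : ∀ x ∈ I, ∀ y ∈ I, ∀ t ∈ Set.Icc (0:ℝ) 1,
      f (x * y / (t * x + (1 - t) * y)) ≤ t ^ s * f y + (1 - t) ^ s * f x)
    (hint : IntervalIntegrable f volume a b) :
    a * b / (b - a) * ∫ x in a..b, f x / x ^ 2 ≤ (f a + f b) / (s + 1) := by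
  obtain ⟨hs0, hs1⟩ := hs
  have hb : 0 < b := ha.trans hab
  have hba : 0 < b - a := by linarith
  have hs1' : (0:ℝ) < s + 1 := by linarith
  set φ : ℝ → ℝ := fun x => b * (x - a) / ((b - a) * x) with hφ
  have huIcc : Set.uIcc a b = Set.Icc a b := Set.uIcc_of_le hab.le
  have hxpos : ∀ x ∈ Set.Icc a b, 0 < x := fun x hx => lt_of_lt_of_le ha hx.1
  have hφmem : ∀ x ∈ Set.Icc a b, φ x ∈ Set.Icc (0:ℝ) 1 := by
    intro x hx
    have hx0 := hxpos x hx
    constructor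
    · apply div_nonneg (by nlinarith [hx.1]) (by positivity)
    · rw [div_le_one (by positivity)]
      nlinarith [hx.2]
  have hφeq : ∀ x ∈ Set.Icc a b, a * b / (φ x * a + (1 - φ x) * b) = x := by
    intro x hx
    have hx0 := hxpos x hx
    have h1 : φ x * a + (1 - φ x) * b = a * b / x := by
      rw [hφ]; field_simp; ring
    rw [h1]
    field_simp
  set g : ℝ → ℝ := fun x => (φ x ^ s * f b + (1 - φ x) ^ s * f a) / x ^ 2 with hg
  -- pointwise inequality
  have hpt : ∀ x ∈ Set.Icc a b, f x / x ^ 2 ≤ g x := by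
    intro x hx
    have hx0 := hxpos x hx
    have h := hconv a (habI ⟨le_refl a, hab.le⟩) b (habI ⟨hab.le, le_refl b⟩)
      (φ x) (hφmem x hx)
    rw [hφeq x hx] at h
    exact div_le_div_of_nonneg_right h (by positivity)
  -- continuity of φ on Icc a b
  have hφcont : ContinuousOn φ (Set.Icc a b) := by
    apply ContinuousOn.div
    · fun_prop
    · fun_prop
    · intro x hx
      have := hxpos x hx
      positivity
  -- integrability of LHS
  have hint1 : IntervalIntegrable (fun x => f x / x ^ 2) volume a b := by
    have : ∀ x, f x / x ^ 2 = f x * (x ^ 2)⁻¹ := fun x => div_eq_mul_inv _ _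
    simp_rw [this]
    apply hint.mul_continuousOn
    rw [huIcc]
    apply ContinuousOn.inv₀ (by fun_prop)
    intro x hx
    have := hxpos x hx
    positivity
  -- continuity & integrability of RHS
  have hgcont : ContinuousOn g (Set.Icc a b) := by
    apply ContinuousOn.div
    · apply ContinuousOn.add
      · exact (hφcont.rpow_const (fun x _ => Or.inr hs0.le)).mul continuousOn_const
      · exact (((continuousOn_const (c := (1:ℝ))).sub hφcont).rpow_const
          (fun x _ => Or.inr hs0.le)).mul continuousOn_const
    · fun_prop
    · intro x hx
      have := hxpos x hx
      positivity
  have hint2 : IntervalIntegrable g volume a b := by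
    apply ContinuousOn.intervalIntegrable
    rwa [huIcc]
  have hmono := intervalIntegral.integral_mono_on hab.le hint1 hint2 hpt
  -- compute ∫ g via FTC
  set C : ℝ := (b - a) / (a * b * (s + 1)) with hC
  set F : ℝ → ℝ := fun x => C * (f b * φ x ^ (s + 1) - f a * (1 - φ x) ^ (s + 1)) with hF
  have hderiv : ∀ x ∈ Set.uIcc a b, HasDerivAt F (g x) x := by
    intro x hx
    rw [huIcc] at hx
    have hx0 := hxpos x hx
    have hφd : HasDerivAt φ (a * b / ((b - a) * x ^ 2)) x := by
      have h1 : HasDerivAt (fun x => b * (x - a)) b x := by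
        simpa using (((hasDerivAt_id x).sub_const a).const_mul b)
      have h2 : HasDerivAt (fun x => (b - a) * x) (b - a) x := by
        simpa using (hasDerivAt_id x).const_mul (b - a)
      have := h1.div h2 (by positivity)
      refine this.congr_deriv ?_
      rw [div_eq_div_iff (by positivity) (by positivity)]
      ring
    have hd1 : HasDerivAt (fun x => φ x ^ (s + 1))
        ((a * b / ((b - a) * x ^ 2)) * (s + 1) * φ x ^ s) x := by
      have := hφd.rpow_const (p := s + 1) (Or.inr (by linarith))
      simpa using this
    have hd2 : HasDerivAt (fun x => (1 - φ x) ^ (s + 1))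
        ((-(a * b / ((b - a) * x ^ 2))) * (s + 1) * (1 - φ x) ^ s) x := by
      have h3 : HasDerivAt (fun x => 1 - φ x) (-(a * b / ((b - a) * x ^ 2))) x := by
        have h4 := (hasDerivAt_const x (1:ℝ)).sub hφd; rw [zero_sub] at h4; exact h4
      have := h3.rpow_const (p := s + 1) (Or.inr (by linarith))
      simpa using this
    have hdF : HasDerivAt F
        (C * (f b * ((a * b / ((b - a) * x ^ 2)) * (s + 1) * φ x ^ s)
          - f a * ((-(a * b / ((b - a) * x ^ 2))) * (s + 1) * (1 - φ x) ^ s))) x :=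
      (((hd1.const_mul (f b)).sub (hd2.const_mul (f a))).const_mul C)
    convert hdF using 1
    rw [hg, hC]
    field_simp
    ring
  have hFTC := intervalIntegral.integral_eq_sub_of_hasDerivAt hderiv hint2
  have hφa : φ a = 0 := by rw [hφ]; simp
  have hφb : φ b = 1 := by
    rw [hφ]; field_simp
  have hFb : F b = C * f b := by
    rw [hF]; simp [hφb, Real.zero_rpow (by linarith : s + 1 ≠ 0), Real.one_rpow]
  have hFa : F a = -(C * f a) := by
    rw [hF]; simp [hφa, Real.zero_rpow (by linarith : s + 1 ≠ 0), Real.one_rpow]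
  have hval : ∫ x in a..b, g x = C * (f a + f b) := by
    rw [hFTC, hFb, hFa]; ring
  rw [hval] at hmono
  have hfinal := mul_le_mul_of_nonneg_left hmono (le_of_lt (by positivity : (0:ℝ) < a * b / (b - a)))
  calc a * b / (b - a) * ∫ x in a..b, f x / x ^ 2
      ≤ a * b / (b - a) * (C * (f a + f b)) := hfinal
    _ = (f a + f b) / (s + 1) := by rw [hC]; field_simp
end

section
/- Let f : I ⊂ ℝ∖{0} → ℝ be differentiable on the interior of I, with 0 < a < b, a,b ∈ I, and f' integrable on [a,b]. Then (f(a)+f(b))/2 − (ab/(b−a)) ∫_a^b f(x)/x² dx = (ab(b−a)/2) ∫_0^1 (1−2t)/(tb+(1−t)a)² · f'(ab/(tb+(1−t)a)) dt. -/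
open MeasureTheory intervalIntegral

theorem HH_integral_identity
    (a b : ℝ) (ha : 0 < a) (hab : a < b)
    (f f' : ℝ → ℝ)
    (hderiv : ∀ x ∈ Set.Icc a b, HasDerivAt f (f' x) x)
    (hint : IntervalIntegrable f' volume a b) :
    (f a + f b) / 2 - a * b / (b - a) * ∫ x in a..b, f x / x ^ 2 =
      a * b * (b - a) / 2 *
        ∫ t in (0:ℝ)..1, (1 - 2 * t) / (t * b + (1 - t) * a) ^ 2 *
          f' (a * b / (t * b + (1 - t) * a)) := by
  have hb : 0 < b := ha.trans hab
  have hba : 0 < b - a := sub_pos.mpr hab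
  set u : ℝ → ℝ := fun t => t * b + (1 - t) * a with hu_def
  set φ : ℝ → ℝ := fun t => a * b / u t with hφ_def
  set φd : ℝ → ℝ := fun t => -(a * b * (b - a)) / (u t) ^ 2 with hφd_def
  have hucont : Continuous u := by continuity
  have huderiv : ∀ t : ℝ, HasDerivAt u (b - a) t := by
    intro t
    have : HasDerivAt (fun t : ℝ => t * b + (1 - t) * a) (1 * b + (0 - 1) * a) t := by
      exact (((hasDerivAt_id t).mul_const b).add
        (((hasDerivAt_const t (1:ℝ)).sub (hasDerivAt_id t)).mul_const a))
    simpa using this.congr_deriv (by ring)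
  have hupos : ∀ t ∈ Set.Icc (0:ℝ) 1, 0 < u t := by
    intro t ht
    have h1 := ht.1; have h2 := ht.2
    simp only [hu_def]
    nlinarith
  have huIcc : Set.uIcc (0:ℝ) 1 = Set.Icc (0:ℝ) 1 := Set.uIcc_of_le (by norm_num)
  have hφderiv : ∀ t ∈ Set.Icc (0:ℝ) 1, HasDerivAt φ (φd t) t := by
    intro t ht
    have := (hasDerivAt_const t (a * b)).div (huderiv t) (hupos t ht).ne'
    exact this.congr_deriv (by simp only [hφd_def]; ring)
  have hmaps : ∀ t ∈ Set.Icc (0:ℝ) 1, φ t ∈ Set.Icc a b := by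
    intro t ht
    have hu0 := hupos t ht
    have h1 := ht.1; have h2 := ht.2
    have hub : u t ≤ b := by simp only [hu_def]; nlinarith
    have hua : a ≤ u t := by simp only [hu_def]; nlinarith
    constructor
    · rw [le_div_iff₀ hu0]; nlinarith
    · rw [div_le_iff₀ hu0]; nlinarith
  have hφ0 : φ 0 = b := by simp [hφ_def, hu_def]; field_simp
  have hφ1 : φ 1 = a := by simp [hφ_def, hu_def]; field_simp
  have hφcont : ContinuousOn φ (Set.Icc 0 1) :=
    continuousOn_const.div hucont.continuousOn (fun t ht => (hupos t ht).ne')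
  have hφdcont : ContinuousOn φd (Set.Icc 0 1) :=
    continuousOn_const.div (by fun_prop) (fun t ht => pow_ne_zero 2 (hupos t ht).ne')
  have hinj : Set.InjOn φ (Set.Icc 0 1) := by
    intro s hs t ht h
    have hs0 := hupos s hs; have ht0 := hupos t ht
    have hus : u s = u t := by
      have hab0 : a * b ≠ 0 := by positivity
      have h' : a * b * u t = a * b * u s := by
        rw [div_eq_div_iff hs0.ne' ht0.ne'] at h
        exact h
      exact (mul_left_cancel₀ hab0 h').symm
    have : s * (b - a) = t * (b - a) := by
      simp only [hu_def] at hus; linarith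
    exact mul_right_cancel₀ hba.ne' this
  have himg : φ '' Set.Icc 0 1 = Set.Icc a b := by
    apply Set.Subset.antisymm
    · rintro x ⟨t, ht, rfl⟩; exact hmaps t ht
    · have := intermediate_value_Icc' (by norm_num : (0:ℝ) ≤ 1) hφcont
      rw [hφ0, hφ1] at this
      exact this
  have hfc : ContinuousOn f (Set.Icc a b) := fun x hx =>
    (hderiv x hx).continuousAt.continuousWithinAt
  -- integrability for the f' ∘ φ term
  have hint' : IntegrableOn f' (Set.Icc a b) :=
    (intervalIntegrable_iff_integrableOn_Icc_of_le hab.le).mp hint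
  have hI : IntegrableOn (fun t => |φd t| • f' (φ t)) (Set.Icc 0 1) := by
    rw [← integrableOn_image_iff_integrableOn_abs_deriv_smul measurableSet_Icc
      (fun t ht => (hφderiv t ht).hasDerivWithinAt) hinj f', himg]
    exact hint'
  have hv'def : ∀ t ∈ Set.Icc (0:ℝ) 1,
      |φd t| • f' (φ t) = -(f' (φ t) * φd t) := by
    intro t ht
    have h1 : φd t < 0 := by
      have := hupos t ht
      simp only [hφd_def]
      apply div_neg_of_neg_of_pos
      · have : 0 < a * b * (b - a) := by positivity
        linarith
      · positivity
    rw [abs_of_neg h1]; simp [smul_eq_mul]; ring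
  have hv'int : IntervalIntegrable (fun t => f' (φ t) * φd t) volume 0 1 := by
    rw [intervalIntegrable_iff_integrableOn_Icc_of_le (by norm_num)]
    exact MeasureTheory.IntegrableOn.congr_fun hI.neg (fun t ht => by
      rw [Pi.neg_apply, hv'def t ht, neg_neg]) measurableSet_Icc
  -- integration by parts
  have hvderiv : ∀ t ∈ Set.uIcc (0:ℝ) 1, HasDerivAt (f ∘ φ) (f' (φ t) * φd t) t := by
    rw [huIcc]
    intro t ht
    exact (hderiv (φ t) (hmaps t ht)).comp t (hφderiv t ht)
  have hFcont : ContinuousOn (f ∘ φ) (Set.Icc 0 1) :=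
    hfc.comp hφcont (fun t ht => hmaps t ht)
  have hparts := intervalIntegral.integral_mul_deriv_eq_deriv_mul
    (u := fun t : ℝ => 1 - 2 * t) (u' := fun _ => (-2 : ℝ))
    (v := f ∘ φ) (v' := fun t => f' (φ t) * φd t)
    (fun t _ => by
      exact ((hasDerivAt_const t (1:ℝ)).sub ((hasDerivAt_id t).const_mul 2)).congr_deriv
        (by ring))
    hvderiv intervalIntegrable_const hv'int
  -- substitution for ∫ f∘φ
  have hsub := intervalIntegral.integral_comp_smul_deriv' (a := (0:ℝ)) (b := 1)
    (f := φ) (f' := φd) (g := fun x => f x / x ^ 2)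
    (huIcc ▸ hφderiv) (huIcc ▸ hφdcont)
    (by
      rw [huIcc, himg]
      exact hfc.div (by fun_prop) (fun x hx => pow_ne_zero 2 (ha.trans_le hx.1).ne'))
  rw [hφ0, hφ1] at hsub
  have hK : ∫ t in (0:ℝ)..1, φd t • (f (φ t) / (φ t) ^ 2) =
      - ∫ x in a..b, f x / x ^ 2 := by
    rw [← intervalIntegral.integral_symm]
    exact hsub
  have hpt : ∀ t ∈ Set.Icc (0:ℝ) 1,
      φd t • (f (φ t) / (φ t) ^ 2) = (-(b - a) / (a * b)) * (f ∘ φ) t := by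
    intro t ht
    have hu0 := hupos t ht
    have hab0 : (0:ℝ) < a * b := by positivity
    simp only [hφd_def, hφ_def, smul_eq_mul, Function.comp]
    field_simp
  have hF : ∫ t in (0:ℝ)..1, (f ∘ φ) t =
      (a * b / (b - a)) * ∫ x in a..b, f x / x ^ 2 := by
    have h1 : ∫ t in (0:ℝ)..1, φd t • (f (φ t) / (φ t) ^ 2) =
        ∫ t in (0:ℝ)..1, (-(b - a) / (a * b)) * (f ∘ φ) t := by
      apply intervalIntegral.integral_congr
      rw [huIcc]; exact hpt
    rw [h1, intervalIntegral.integral_const_mul] at hK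
    have hc : (-(b - a) / (a * b)) ≠ 0 := by
      apply div_ne_zero
      · exact neg_ne_zero.mpr hba.ne'
      · positivity
    field_simp at hK ⊢
    nlinarith [hK]
  -- relate RHS integral to parts integral
  have hJ : ∫ t in (0:ℝ)..1, (1 - 2 * t) * (f' (φ t) * φd t) =
      (-(a * b * (b - a))) * ∫ t in (0:ℝ)..1, (1 - 2 * t) / (u t) ^ 2 * f' (φ t) := by
    rw [← intervalIntegral.integral_const_mul]
    apply intervalIntegral.integral_congr
    intro t _
    simp only [hφd_def]
    ring
  -- finish
  simp only [Function.comp] at hparts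
  rw [hφ0, hφ1] at hparts
  rw [hJ] at hparts
  have h2 : ∫ t in (0:ℝ)..1, (-2 : ℝ) * (f ∘ φ) t = -2 * ((a * b / (b - a)) * ∫ x in a..b, f x / x ^ 2) := by
    rw [intervalIntegral.integral_const_mul]
    simp only [Function.comp] at hF ⊢
    rw [hF]
  simp only [Function.comp] at h2
  rw [h2] at hparts
  have hgoal : (∫ t in (0:ℝ)..1, (1 - 2 * t) / (t * b + (1 - t) * a) ^ 2 *
          f' (a * b / (t * b + (1 - t) * a))) =
      ∫ t in (0:ℝ)..1, (1 - 2 * t) / (u t) ^ 2 * f' (φ t) := rfl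
  rw [hgoal]
  have habba : a * b * (b - a) ≠ 0 := by positivity
  set J := ∫ t in (0:ℝ)..1, (1 - 2 * t) / (u t) ^ 2 * f' (φ t)
  set K := ∫ x in a..b, f x / x ^ 2
  -- hparts : -(a*b*(b-a)) * J = (1-2*1)*f a - (1-2*0)*f b - (-2*((a*b/(b-a))*K))
  have hba' : (b - a) ≠ 0 := hba.ne'
  field_simp at hparts ⊢
  nlinarith [hparts]
end

section
/- Let f : I ⊂ (0,∞) → ℝ be differentiable on the interior of I, 0 < a < b, m ∈ (0,1], s ∈ (0,1], q ≥ 1, with f' integrable on [a,b] and |f'|^q harmonically (s,m)-convex in the second sense on [a, b/m]. Then |(f(a)+f(b))/2 − (ab/(b−a))∫_a^b f(x)/x² dx| ≤ (ab(b−a)/2^{2−1/q}) [ρ₁(s,q;a,b)|f'(a)|^q + m ρ₂(s,q;a,b)|f'(b/m)|^q]^{1/q}, where ρ₁(s,q;a,b) = ∫_0^1 |1−2t| t^s / (tb+(1−t)a)^{2q} dt and ρ₂(s,q;a,b) = ∫_0^1 |1−2t| (1−t)^s / (tb+(1−t)a)^{2q} dt. -/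
open MeasureTheory intervalIntegral Set

private lemma aux_abs_half : ∫ t in (0:ℝ)..1, |1 - 2*t| = 1/2 := by
  have i1 : IntervalIntegrable (fun t : ℝ => |1 - 2*t|) volume 0 (1/2) :=
    ((continuous_const.sub (continuous_const.mul continuous_id')).abs).intervalIntegrable _ _
  have i2 : IntervalIntegrable (fun t : ℝ => |1 - 2*t|) volume (1/2) 1 :=
    ((continuous_const.sub (continuous_const.mul continuous_id')).abs).intervalIntegrable _ _
  rw [← intervalIntegral.integral_add_adjacent_intervals i1 i2]
  have e1 : ∫ t in (0:ℝ)..(1/2), |1 - 2*t| = ∫ t in (0:ℝ)..(1/2), (1 - 2*t) := by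
    apply intervalIntegral.integral_congr
    intro t ht
    rw [uIcc_of_le (by norm_num)] at ht
    show |1 - 2*t| = 1 - 2*t
    exact abs_of_nonneg (by linarith [ht.1, ht.2])
  have e2 : ∫ t in (1/2:ℝ)..1, |1 - 2*t| = ∫ t in (1/2:ℝ)..1, (2*t - 1) := by
    apply intervalIntegral.integral_congr
    intro t ht
    rw [uIcc_of_le (by norm_num)] at ht
    show |1 - 2*t| = 2*t - 1
    rw [abs_of_nonpos (by linarith [ht.1, ht.2])]; ring
  rw [e1, e2]
  have c1 : ∫ t in (0:ℝ)..(1/2), (1 - 2*t) = 1/4 := by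
    rw [intervalIntegral.integral_sub (f := fun _ => (1:ℝ)) (g := fun t : ℝ => 2*t) (intervalIntegrable_const)
      ((continuous_const.mul continuous_id').intervalIntegrable _ _),
      intervalIntegral.integral_const_mul, integral_id, intervalIntegral.integral_const]
    simp; norm_num
  have c2 : ∫ t in (1/2:ℝ)..1, (2*t - 1) = 1/4 := by
    rw [intervalIntegral.integral_sub (f := fun t : ℝ => 2*t) (g := fun _ => (1:ℝ))
      ((continuous_const.mul continuous_id').intervalIntegrable _ _) intervalIntegrable_const,
      intervalIntegral.integral_const_mul, integral_id, intervalIntegral.integral_const]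
    simp; norm_num
  rw [c1, c2]; norm_num

private lemma aux_u_deriv (a b t : ℝ) :
    HasDerivAt (fun t : ℝ => t * b + (1 - t) * a) (b - a) t := by
  have h : HasDerivAt (fun t : ℝ => t * b + (1 - t) * a) (1 * b + (0 - 1) * a) t :=
    ((hasDerivAt_id t).mul_const b).add
      (((hasDerivAt_const t (1:ℝ)).sub (hasDerivAt_id t)).mul_const a)
  convert h using 1; ring

private lemma aux_phi_deriv (a b t : ℝ) (hne : t * b + (1 - t) * a ≠ 0) :
    HasDerivAt (fun t : ℝ => a * b / (t * b + (1 - t) * a))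
      (-(a * b * (b - a)) / (t * b + (1 - t) * a) ^ 2) t := by
  have h := (hasDerivAt_const t (a * b)).fun_div (aux_u_deriv a b t) hne
  rw [show -(a * b * (b - a)) / (t * b + (1 - t) * a) ^ 2
    = (0 * (t * b + (1 - t) * a) - a * b * (b - a)) / (t * b + (1 - t) * a) ^ 2 by ring]
  exact h

set_option maxHeartbeats 2000000 in
theorem HH_bound_power_mean_sm
    (a b m s q : ℝ) (ha : 0 < a) (hab : a < b)
    (hm : m ∈ Set.Ioc (0:ℝ) 1) (hs : s ∈ Set.Ioc (0:ℝ) 1) (hq : 1 ≤ q)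
    (f f' : ℝ → ℝ)
    (hderiv : ∀ x ∈ Set.Icc a (b / m), HasDerivAt f (f' x) x)
    (hint : IntervalIntegrable f' volume a b)
    (hconv : ∀ x ∈ Set.Icc a (b / m), ∀ y ∈ Set.Icc a (b / m), ∀ t ∈ Set.Icc (0:ℝ) 1,
      |f' (m * x * y / (m * t * y + (1 - t) * x))| ^ q ≤
        t ^ s * |f' x| ^ q + m * (1 - t) ^ s * |f' y| ^ q) :
    |(f a + f b) / 2 - a * b / (b - a) * ∫ x in a..b, f x / x ^ 2| ≤
      a * b * (b - a) / 2 ^ (2 - 1 / q) *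
        ((∫ t in (0:ℝ)..1, |1 - 2 * t| * t ^ s / (t * b + (1 - t) * a) ^ (2 * q)) * |f' a| ^ q +
          m * (∫ t in (0:ℝ)..1, |1 - 2 * t| * (1 - t) ^ s / (t * b + (1 - t) * a) ^ (2 * q)) *
            |f' (b / m)| ^ q) ^ (1 / q) := by
  obtain ⟨hm0, hm1⟩ := hm
  obtain ⟨hs0, hs1⟩ := hs
  have hb : 0 < b := ha.trans hab
  have hba : 0 < b - a := sub_pos.2 hab
  have hq0 : 0 < q := lt_of_lt_of_le one_pos hq
  have hq0' : q ≠ 0 := hq0.ne'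
  have hbm : b ≤ b / m := by rw [le_div_iff₀ hm0]; nlinarith
  have habm : a ≤ b / m := le_trans hab.le hbm
  have ham : a ∈ Icc a (b/m) := ⟨le_refl a, habm⟩
  have hbmm : b/m ∈ Icc a (b/m) := ⟨habm, le_refl _⟩
  set u : ℝ → ℝ := fun t => t * b + (1 - t) * a with hu_def
  set φ : ℝ → ℝ := fun t => a * b / u t with hφ_def
  have hu_mem : ∀ t ∈ Icc (0:ℝ) 1, a ≤ u t ∧ u t ≤ b := by
    intro t ht
    constructor
    · show a ≤ t * b + (1 - t) * a; nlinarith [ht.1, ht.2]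
    · show t * b + (1 - t) * a ≤ b; nlinarith [ht.1, ht.2]
  have hu_pos : ∀ t ∈ Icc (0:ℝ) 1, 0 < u t := fun t ht => lt_of_lt_of_le ha (hu_mem t ht).1
  have hφ_mem : ∀ t ∈ Icc (0:ℝ) 1, φ t ∈ Icc a b := by
    intro t ht
    obtain ⟨h1, h2⟩ := hu_mem t ht
    have hup := hu_pos t ht
    constructor
    · show a ≤ a * b / u t
      rw [le_div_iff₀ hup]; nlinarith
    · show a * b / u t ≤ b
      rw [div_le_iff₀ hup]; nlinarith
  have hφ_mem' : ∀ t ∈ Icc (0:ℝ) 1, φ t ∈ Icc a (b / m) :=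
    fun t ht => ⟨(hφ_mem t ht).1, le_trans (hφ_mem t ht).2 hbm⟩
  have hφd : ∀ t ∈ Icc (0:ℝ) 1, HasDerivAt φ (-(a*b*(b-a)) / (u t)^2) t :=
    fun t ht => aux_phi_deriv a b t (hu_pos t ht).ne'
  have hcomp : ∀ t ∈ Icc (0:ℝ) 1,
      HasDerivAt (fun t => f (φ t)) (f' (φ t) * (-(a*b*(b-a)) / (u t)^2)) t :=
    fun t ht => (hderiv (φ t) (hφ_mem' t ht)).comp t (hφd t ht)
  have hu_cont : Continuous u := by
    apply Continuous.add (continuous_id'.mul continuous_const)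
    exact (continuous_const.sub continuous_id').mul continuous_const
  have hφ_meas : Measurable φ := measurable_const.div hu_cont.measurable
  have hf'eq : ∀ x ∈ Icc a (b/m), f' x = deriv f x := fun x hx => ((hderiv x hx).deriv).symm
  have hDF : Measurable (fun t => deriv f (φ t)) := (measurable_deriv f).comp hφ_meas
  have haesm : AEStronglyMeasurable (fun t => f' (φ t)) (volume.restrict (Ioc (0:ℝ) 1)) := by
    apply hDF.aestronglyMeasurable.congr
    filter_upwards [ae_restrict_mem measurableSet_Ioc] with t ht
    exact (hf'eq (φ t) (hφ_mem' t ⟨ht.1.le, ht.2⟩)).symm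
  set A := |f' a| ^ q with hA_def
  set B := |f' (b/m)| ^ q with hB_def
  have hA0 : 0 ≤ A := Real.rpow_nonneg (abs_nonneg _) _
  have hB0 : 0 ≤ B := Real.rpow_nonneg (abs_nonneg _) _
  have hkey : ∀ t ∈ Icc (0:ℝ) 1, |f' (φ t)| ^ q ≤ t ^ s * A + m * (1 - t) ^ s * B := by
    intro t ht
    have h := hconv a ham (b/m) hbmm t ht
    have e1 : m * a * (b / m) = a * b := by field_simp
    have e2 : m * t * (b / m) + (1 - t) * a = u t := by
      show _ = t * b + (1 - t) * a
      field_simp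
    rw [e1, e2] at h
    exact h
  have habs_eq : ∀ x : ℝ, |x| = (|x| ^ q) ^ (1/q) := by
    intro x
    rw [← Real.rpow_mul (abs_nonneg x), mul_one_div, div_self hq0', Real.rpow_one]
  have hkey2 : ∀ t ∈ Icc (0:ℝ) 1, |f' (φ t)| ^ q ≤ A + m * B := by
    intro t ht
    refine (hkey t ht).trans ?_
    have h1 : t ^ s ≤ 1 := Real.rpow_le_one ht.1 ht.2 hs0.le
    have h2 : (1 - t) ^ s ≤ 1 := Real.rpow_le_one (by linarith [ht.2]) (by linarith [ht.1]) hs0.le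
    have h3 : t ^ s * A ≤ A := mul_le_of_le_one_left hA0 h1
    have h4 : (1-t) ^ s * B ≤ B := mul_le_of_le_one_left hB0 h2
    have h5 := mul_le_mul_of_nonneg_left h4 hm0.le
    linarith [h3, h5]
  have hMbd : ∀ t ∈ Icc (0:ℝ) 1, |f' (φ t)| ≤ (A + m * B) ^ (1/q) := by
    intro t ht
    rw [habs_eq (f' (φ t))]
    exact Real.rpow_le_rpow (Real.rpow_nonneg (abs_nonneg _) _) (hkey2 t ht) (by positivity)
  have hD_cont : ContinuousOn (fun t => -(a*b*(b-a)) / (u t)^2) (Icc (0:ℝ) 1) := by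
    apply ContinuousOn.div continuousOn_const ((hu_cont.pow 2).continuousOn)
    exact fun t ht => pow_ne_zero 2 (hu_pos t ht).ne'
  have hDbd : ∀ t ∈ Icc (0:ℝ) 1, |(-(a*b*(b-a)) / (u t)^2)| ≤ a*b*(b-a)/a^2 := by
    intro t ht
    rw [abs_div, abs_neg, abs_of_nonneg (by positivity : (0:ℝ) ≤ a*b*(b-a)),
      abs_of_nonneg (by positivity : (0:ℝ) ≤ (u t)^2)]
    gcongr
    exact (hu_mem t ht).1
  have hv'int : IntervalIntegrable (fun t => f' (φ t) * (-(a*b*(b-a)) / (u t)^2)) volume 0 1 := by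
    rw [intervalIntegrable_iff_integrableOn_Ioc_of_le zero_le_one]
    apply Integrable.mono' (g := fun _ => (A + m*B)^(1/q) * (a*b*(b-a)/a^2))
      (integrable_const _)
    · exact haesm.mul ((hD_cont.mono Ioc_subset_Icc_self).aestronglyMeasurable measurableSet_Ioc)
    · filter_upwards [ae_restrict_mem measurableSet_Ioc] with t ht
      have ht' : t ∈ Icc (0:ℝ) 1 := Ioc_subset_Icc_self ht
      rw [Real.norm_eq_abs, abs_mul]
      exact mul_le_mul (hMbd t ht') (hDbd t ht') (abs_nonneg _) (by positivity)
  have huu : ∀ x ∈ uIcc (0:ℝ) 1, HasDerivAt (fun t : ℝ => 1 - 2*t) (-2 : ℝ) x := by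
    intro x _
    have h : HasDerivAt (fun t : ℝ => 1 - 2*t) (0 - 2*1) x :=
      (hasDerivAt_const x (1:ℝ)).sub (HasDerivAt.const_mul (2:ℝ) (hasDerivAt_id x))
    convert h using 1; norm_num
  have hparts := intervalIntegral.integral_mul_deriv_eq_deriv_mul huu
    (fun x hx => hcomp x (by rwa [uIcc_of_le zero_le_one] at hx))
    (_root_.intervalIntegrable_const (c := (-2:ℝ))) hv'int
  have hφ1 : φ 1 = a := by
    show a * b / (1*b + (1-1)*a) = a
    rw [show (1:ℝ)*b + (1-1)*a = b by ring]
    field_simp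
  have hφ0 : φ 0 = b := by
    show a * b / (0*b + (1-0)*a) = b
    rw [show (0:ℝ)*b + (1-0)*a = a by ring]
    field_simp
  -- substitution
  have hf_cont : ContinuousOn f (Icc a (b/m)) :=
    fun x hx => (hderiv x hx).continuousAt.continuousWithinAt
  have hg_cont : ContinuousOn (fun x => f x / x^2) (Icc a b) := by
    apply ContinuousOn.div (hf_cont.mono (Icc_subset_Icc_right hbm)) ((continuous_pow 2).continuousOn)
    exact fun x hx => pow_ne_zero 2 (lt_of_lt_of_le ha hx.1).ne'
  have himg : φ '' (uIcc (0:ℝ) 1) ⊆ Icc a b := by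
    rw [uIcc_of_le zero_le_one]
    rintro x ⟨t, ht, rfl⟩
    exact hφ_mem t ht
  have hDcont' : ContinuousOn (fun t => -(a*b*(b-a)) / (u t)^2) (uIcc (0:ℝ) 1) := by
    rwa [uIcc_of_le zero_le_one]
  have hsub := intervalIntegral.integral_comp_smul_deriv'
      (f := φ) (f' := fun t => -(a*b*(b-a)) / (u t)^2) (g := fun x => f x / x^2)
      (fun t ht => hφd t (by rwa [uIcc_of_le zero_le_one] at ht)) hDcont' (hg_cont.mono himg)
  set R := ∫ x in a..b, f x / x^2 with hR_def
  have hsub2 : (∫ t in (0:ℝ)..1, (-(a*b*(b-a)) / (u t)^2) • ((fun x => f x / x^2) ∘ φ) t)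
      = ∫ t in (0:ℝ)..1, (-((b-a)/(a*b))) * f (φ t) := by
    apply intervalIntegral.integral_congr
    intro t ht
    rw [uIcc_of_le zero_le_one] at ht
    have hup := (hu_pos t ht).ne'
    have hφp : φ t ≠ 0 := (lt_of_lt_of_le ha (hφ_mem t ht).1).ne'
    show (-(a*b*(b-a)) / (u t)^2) * (f (φ t) / (φ t)^2) = (-((b-a)/(a*b))) * f (φ t)
    have hφt : φ t = a*b/u t := rfl
    rw [hφt, div_pow]
    field_simp
  have hc : (-((b-a)/(a*b))) ≠ 0 := by
    simp only [neg_ne_zero]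
    positivity
  have hV : (∫ t in (0:ℝ)..1, f (φ t)) = a*b/(b-a) * R := by
    have h1 : (-((b-a)/(a*b))) * ∫ t in (0:ℝ)..1, f (φ t) = -R := by
      rw [← intervalIntegral.integral_const_mul, ← hsub2, hsub, hφ0, hφ1,
        intervalIntegral.integral_symm, hR_def]
    apply mul_left_cancel₀ hc
    rw [h1]
    field_simp
  have hP : ∫ t in (0:ℝ)..1, (1-2*t) * (f' (φ t) * (-(a*b*(b-a)) / (u t)^2))
      = -(f a) - f b + 2 * (a*b/(b-a) * R) := by
    rw [hparts]
    simp only [hφ1, hφ0, intervalIntegral.integral_const_mul]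
    rw [hV]
    ring
  have hI2 : ∫ t in (0:ℝ)..1, (1-2*t) * (f' (φ t) * (-(a*b*(b-a)) / (u t)^2))
      = -(a*b*(b-a)) * ∫ t in (0:ℝ)..1, (1-2*t)/(u t)^2 * f' (φ t) := by
    rw [← intervalIntegral.integral_const_mul]
    apply intervalIntegral.integral_congr
    intro t ht
    rw [uIcc_of_le zero_le_one] at ht
    have hup := (hu_pos t ht).ne'
    show (1-2*t) * (f' (φ t) * (-(a*b*(b-a)) / (u t)^2))
      = -(a*b*(b-a)) * ((1-2*t)/(u t)^2 * f' (φ t))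
    field_simp
  set I := ∫ t in (0:ℝ)..1, (1-2*t)/(u t)^2 * f' (φ t) with hI_def
  have hIdent : (f a + f b)/2 - a*b/(b-a) * R = a*b*(b-a)/2 * I := by
    have hP2 : -(a*b*(b-a)) * I = -(f a) - f b + 2 * (a*b/(b-a) * R) := by
      rw [← hI2]; exact hP
    linear_combination (1/2 : ℝ) * hP2
  -- step: |I| ≤ J
  have hJ : |I| ≤ ∫ t in (0:ℝ)..1, |1-2*t|/(u t)^2 * |f' (φ t)| := by
    refine (intervalIntegral.abs_integral_le_integral_abs zero_le_one).trans_eq ?_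
    apply intervalIntegral.integral_congr
    intro t ht
    rw [uIcc_of_le zero_le_one] at ht
    show |(1-2*t)/(u t)^2 * f' (φ t)| = |1-2*t|/(u t)^2 * |f' (φ t)|
    rw [abs_mul, abs_div, abs_of_nonneg (sq_nonneg (u t))]
  set J := ∫ t in (0:ℝ)..1, |1-2*t|/(u t)^2 * |f' (φ t)| with hJ_def
  set K := ∫ t in (0:ℝ)..1, |1-2*t| * |f' (φ t)| ^ q / (u t) ^ (2*q) with hK_def
  -- measurability and bound of K's integrand
  have hw_cont : Continuous (fun t : ℝ => |1 - 2*t|) :=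
    (continuous_const.sub (continuous_const.mul continuous_id')).abs
  have hKmeas : AEStronglyMeasurable (fun t => |1-2*t| * |f' (φ t)| ^ q / (u t) ^ (2*q))
      (volume.restrict (Ioc (0:ℝ) 1)) := by
    have hmeas : Measurable (fun t => |1-2*t| * |deriv f (φ t)| ^ q / (u t) ^ (2*q)) := by
      apply Measurable.div
      · exact (hw_cont.measurable).mul (hDF.abs.pow measurable_const)
      · exact (hu_cont.measurable).pow measurable_const
    apply hmeas.aestronglyMeasurable.congr
    filter_upwards [ae_restrict_mem measurableSet_Ioc] with t ht
    rw [hf'eq (φ t) (hφ_mem' t (Ioc_subset_Icc_self ht))]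
  have hinner_nonneg : ∀ t ∈ Icc (0:ℝ) 1, (0:ℝ) ≤ |1-2*t| * |f' (φ t)| ^ q / (u t) ^ (2*q) :=
    fun t ht => div_nonneg (mul_nonneg (abs_nonneg _) (Real.rpow_nonneg (abs_nonneg _) _))
      (Real.rpow_nonneg (hu_pos t ht).le _)
  have hKbd : ∀ t ∈ Icc (0:ℝ) 1,
      |1-2*t| * |f' (φ t)| ^ q / (u t) ^ (2*q) ≤ (A + m*B) / a ^ (2*q) := by
    intro t ht
    have h1 : |1-2*t| ≤ 1 := by
      rw [abs_le]; constructor <;> linarith [ht.1, ht.2]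
    have h3 : a ^ (2*q) ≤ (u t) ^ (2*q) :=
      Real.rpow_le_rpow ha.le (hu_mem t ht).1 (by positivity)
    have h4 : (0:ℝ) < a ^ (2*q) := Real.rpow_pos_of_pos ha _
    have hnum : |1-2*t| * |f' (φ t)| ^ q ≤ A + m*B := by
      calc |1-2*t| * |f' (φ t)| ^ q ≤ 1 * (A+m*B) :=
            mul_le_mul h1 (hkey2 t ht) (Real.rpow_nonneg (abs_nonneg _) _) one_pos.le
        _ = A + m*B := one_mul _
    exact div_le_div₀ (add_nonneg hA0 (mul_nonneg hm0.le hB0)) hnum h4 h3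
  have hKint : IntervalIntegrable (fun t => |1-2*t| * |f' (φ t)| ^ q / (u t) ^ (2*q)) volume 0 1 := by
    rw [intervalIntegrable_iff_integrableOn_Ioc_of_le zero_le_one]
    apply Integrable.mono' (integrable_const ((A + m*B) / a ^ (2*q))) hKmeas
    filter_upwards [ae_restrict_mem measurableSet_Ioc] with t ht
    have ht' := Ioc_subset_Icc_self ht
    rw [Real.norm_eq_abs, abs_of_nonneg (hinner_nonneg t ht')]
    exact hKbd t ht'
  have hK0 : 0 ≤ K := intervalIntegral.integral_nonneg zero_le_one hinner_nonneg
  -- continuity facts for ρ integrands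
  have hts_cont : Continuous (fun t : ℝ => t ^ s) := by
    apply continuous_iff_continuousAt.2
    intro x
    exact Real.continuousAt_rpow_const x s (Or.inr hs0.le)
  have h1ts_cont : Continuous (fun t : ℝ => (1 - t) ^ s) := by
    apply continuous_iff_continuousAt.2
    intro x
    exact (Real.continuousAt_rpow_const (1-x) s (Or.inr hs0.le)).comp
      ((continuous_const.sub continuous_id').continuousAt)
  have hu2q : ContinuousOn (fun t => (u t) ^ (2*q)) (Icc (0:ℝ) 1) := by
    apply ContinuousOn.rpow_const hu_cont.continuousOn
    exact fun t ht => Or.inl (hu_pos t ht).ne'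
  have hu2q_ne : ∀ t ∈ Icc (0:ℝ) 1, (u t) ^ (2*q) ≠ 0 :=
    fun t ht => (Real.rpow_pos_of_pos (hu_pos t ht) _).ne'
  set ρ1 := ∫ t in (0:ℝ)..1, |1 - 2 * t| * t ^ s / (t * b + (1 - t) * a) ^ (2 * q) with hρ1_def
  set ρ2 := ∫ t in (0:ℝ)..1, |1 - 2 * t| * (1 - t) ^ s / (t * b + (1 - t) * a) ^ (2 * q) with hρ2_def
  have hg1_cont : ContinuousOn (fun t : ℝ => |1 - 2 * t| * t ^ s / (t * b + (1 - t) * a) ^ (2 * q))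
      (Icc (0:ℝ) 1) := (hw_cont.mul hts_cont).continuousOn.div hu2q hu2q_ne
  have hg2_cont : ContinuousOn
      (fun t : ℝ => |1 - 2 * t| * (1 - t) ^ s / (t * b + (1 - t) * a) ^ (2 * q))
      (Icc (0:ℝ) 1) := (hw_cont.mul h1ts_cont).continuousOn.div hu2q hu2q_ne
  have hρ1_nonneg : 0 ≤ ρ1 := by
    apply intervalIntegral.integral_nonneg zero_le_one
    intro t ht
    exact div_nonneg (mul_nonneg (abs_nonneg _) (Real.rpow_nonneg ht.1 _))
      (Real.rpow_nonneg (hu_pos t ht).le _)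
  have hρ2_nonneg : 0 ≤ ρ2 := by
    apply intervalIntegral.integral_nonneg zero_le_one
    intro t ht
    exact div_nonneg (mul_nonneg (abs_nonneg _) (Real.rpow_nonneg (by linarith [ht.2]) _))
      (Real.rpow_nonneg (hu_pos t ht).le _)
  have hXnn : 0 ≤ ρ1 * A + m * ρ2 * B :=
    add_nonneg (mul_nonneg hρ1_nonneg hA0) (mul_nonneg (mul_nonneg hm0.le hρ2_nonneg) hB0)
  -- K ≤ X
  have hKX : K ≤ ρ1 * A + m * ρ2 * B := by
    have hXint : IntervalIntegrable
        (fun t : ℝ => |1 - 2 * t| * t ^ s / (t * b + (1 - t) * a) ^ (2 * q) * A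
          + m * (|1 - 2 * t| * (1 - t) ^ s / (t * b + (1 - t) * a) ^ (2 * q)) * B)
        volume 0 1 := by
      apply ContinuousOn.intervalIntegrable_of_Icc zero_le_one
      exact (hg1_cont.mul continuousOn_const).add
        ((continuousOn_const.mul hg2_cont).mul continuousOn_const)
    have hpt : ∀ t ∈ Icc (0:ℝ) 1, |1-2*t| * |f' (φ t)| ^ q / (u t) ^ (2*q) ≤
        |1 - 2 * t| * t ^ s / (t * b + (1 - t) * a) ^ (2 * q) * A
          + m * (|1 - 2 * t| * (1 - t) ^ s / (t * b + (1 - t) * a) ^ (2 * q)) * B := by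
      intro t ht
      have h2q_pos : (0:ℝ) < (u t) ^ (2*q) := Real.rpow_pos_of_pos (hu_pos t ht) _
      have hnum : |1-2*t| * |f' (φ t)| ^ q ≤ |1-2*t| * (t^s*A + m*(1-t)^s*B) :=
        mul_le_mul_of_nonneg_left (hkey t ht) (abs_nonneg _)
      calc |1-2*t| * |f' (φ t)| ^ q / (u t) ^ (2*q)
          ≤ |1-2*t| * (t^s*A + m*(1-t)^s*B) / (u t) ^ (2*q) := by
            have hYnn : (0:ℝ) ≤ |1-2*t| * (t^s*A + m*(1-t)^s*B) :=
              mul_nonneg (abs_nonneg _)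
                (add_nonneg (mul_nonneg (Real.rpow_nonneg ht.1 s) hA0)
                  (mul_nonneg (mul_nonneg hm0.le (Real.rpow_nonneg (by linarith [ht.2]) s)) hB0))
            exact div_le_div₀ hYnn hnum h2q_pos le_rfl
        _ = |1 - 2 * t| * t ^ s / (t * b + (1 - t) * a) ^ (2 * q) * A
            + m * (|1 - 2 * t| * (1 - t) ^ s / (t * b + (1 - t) * a) ^ (2 * q)) * B := by
            show |1-2*t| * (t^s*A + m*(1-t)^s*B) / (u t) ^ (2*q)
              = |1 - 2 * t| * t ^ s / (u t) ^ (2 * q) * A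
                + m * (|1 - 2 * t| * (1 - t) ^ s / (u t) ^ (2 * q)) * B
            ring
    have hmono := intervalIntegral.integral_mono_on zero_le_one hKint hXint hpt
    refine hmono.trans_eq ?_
    have e1 : IntervalIntegrable
        (fun t : ℝ => |1 - 2 * t| * t ^ s / (t * b + (1 - t) * a) ^ (2 * q) * A) volume 0 1 :=
      ContinuousOn.intervalIntegrable_of_Icc zero_le_one (hg1_cont.mul continuousOn_const)
    have e2 : IntervalIntegrable
        (fun t : ℝ => m * (|1 - 2 * t| * (1 - t) ^ s / (t * b + (1 - t) * a) ^ (2 * q)) * B)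
        volume 0 1 :=
      ContinuousOn.intervalIntegrable_of_Icc zero_le_one
        ((continuousOn_const.mul hg2_cont).mul continuousOn_const)
    rw [intervalIntegral.integral_add e1 e2, intervalIntegral.integral_mul_const]
    congr 1
    have : (fun t : ℝ => m * (|1 - 2 * t| * (1 - t) ^ s / (t * b + (1 - t) * a) ^ (2 * q)) * B)
        = fun t : ℝ => (|1 - 2 * t| * (1 - t) ^ s / (t * b + (1 - t) * a) ^ (2 * q)) * (m * B) :=
      funext fun t => by ring
    rw [this, intervalIntegral.integral_mul_const]
    ring
  -- Hölder
  have hHolder : J ≤ (1/2:ℝ) ^ (1 - 1/q) * K ^ (1/q) := by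
    rcases eq_or_lt_of_le hq with hq1 | hq1
    · -- q = 1
      have hq1' : q = 1 := hq1.symm
      subst hq1'
      rw [show (1:ℝ) - 1/1 = 0 by norm_num, Real.rpow_zero, one_mul,
        show (1:ℝ)/1 = 1 by norm_num, Real.rpow_one]
      refine le_of_eq ?_
      apply intervalIntegral.integral_congr
      intro t ht
      rw [uIcc_of_le zero_le_one] at ht
      show |1-2*t|/(u t)^2 * |f' (φ t)| = |1-2*t| * |f' (φ t)| ^ (1:ℝ) / (u t) ^ (2*(1:ℝ))
      rw [Real.rpow_one, show (2:ℝ)*1 = ((2:ℕ):ℝ) by norm_num, Real.rpow_natCast]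
      ring
    · -- q > 1
      have hq1' : 0 < q - 1 := sub_pos.2 hq1
      set p := q/(q-1) with hp_def
      have hpq : Real.HolderConjugate p q := by
        rw [Real.holderConjugate_iff]; constructor
        · rw [hp_def, lt_div_iff₀ hq1']; linarith
        · rw [hp_def]; field_simp; ring
      have hp0 : 0 < p := hpq.pos
      set F1 := fun t : ℝ => |1-2*t| ^ (1/p) with hF1_def
      set F2 := fun t : ℝ => (|1-2*t| * |f' (φ t)| ^ q / (u t) ^ (2*q)) ^ (1/q) with hF2_def
      have hF1m : MemLp F1 (ENNReal.ofReal p) (volume.restrict (Ioc (0:ℝ) 1)) := by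
        apply MemLp.of_bound
          ((hw_cont.rpow_const (fun x => Or.inr (by positivity))).aestronglyMeasurable) 1
        filter_upwards [ae_restrict_mem measurableSet_Ioc] with t ht
        rw [Real.norm_eq_abs, abs_of_nonneg (Real.rpow_nonneg (abs_nonneg _) _)]
        apply Real.rpow_le_one (abs_nonneg _) _ (by positivity)
        rw [abs_le]; constructor <;> [linarith [ht.1.le, ht.2]; linarith [ht.1.le, ht.2]]
      have hF2m : MemLp F2 (ENNReal.ofReal q) (volume.restrict (Ioc (0:ℝ) 1)) := by
        apply MemLp.of_bound
          ((hKmeas.aemeasurable.pow aemeasurable_const).aestronglyMeasurable)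
          (((A + m*B) / a ^ (2*q)) ^ (1/q))
        filter_upwards [ae_restrict_mem measurableSet_Ioc] with t ht
        have ht' := Ioc_subset_Icc_self ht
        rw [Real.norm_eq_abs, abs_of_nonneg (Real.rpow_nonneg (hinner_nonneg t ht') _)]
        exact Real.rpow_le_rpow (hinner_nonneg t ht') (hKbd t ht') (by positivity)
      have hF1nn : 0 ≤ᵐ[volume.restrict (Ioc (0:ℝ) 1)] F1 :=
        Filter.Eventually.of_forall fun t => Real.rpow_nonneg (abs_nonneg _) _
      have hF2nn : 0 ≤ᵐ[volume.restrict (Ioc (0:ℝ) 1)] F2 := by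
        filter_upwards [ae_restrict_mem measurableSet_Ioc] with t ht
        exact Real.rpow_nonneg (hinner_nonneg t (Ioc_subset_Icc_self ht)) _
      have hH := MeasureTheory.integral_mul_le_Lp_mul_Lq_of_nonneg hpq hF1nn hF2nn hF1m hF2m
      have hL : ∫ t in Ioc (0:ℝ) 1, F1 t * F2 t = J := by
        rw [hJ_def, intervalIntegral.integral_of_le zero_le_one]
        apply setIntegral_congr_fun measurableSet_Ioc
        intro t ht
        have ht' := Ioc_subset_Icc_self ht
        have hup := hu_pos t ht'
        have hw0 : (0:ℝ) ≤ |1-2*t| := abs_nonneg _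
        have hy0 : (0:ℝ) ≤ |f' (φ t)| := abs_nonneg _
        show |1-2*t| ^ (1/p) * (|1-2*t| * |f' (φ t)| ^ q / (u t) ^ (2*q)) ^ (1/q)
          = |1-2*t|/(u t)^2 * |f' (φ t)|
        have e1 : ((|f' (φ t)|) ^ q) ^ (1/q) = |f' (φ t)| := (habs_eq _).symm
        have e2 : ((u t) ^ (2*q)) ^ (1/q) = (u t) ^ 2 := by
          rw [← Real.rpow_mul hup.le, show 2*q*(1/q) = (2:ℝ) by field_simp,
            show (2:ℝ) = ((2:ℕ):ℝ) by norm_num, Real.rpow_natCast]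
        have e3 : |1-2*t| ^ (1/p) * |1-2*t| ^ (1/q) = |1-2*t| := by
          rw [one_div, one_div, ← Real.rpow_add' hw0 (by rw [(Real.holderConjugate_iff.mp hpq).2]; norm_num),
            (Real.holderConjugate_iff.mp hpq).2, Real.rpow_one]
        rw [Real.div_rpow (mul_nonneg hw0 (Real.rpow_nonneg hy0 _)) (Real.rpow_nonneg hup.le _),
          Real.mul_rpow hw0 (Real.rpow_nonneg hy0 _), e1, e2]
        have e4 : |1-2*t| ^ (1/p) * (|1-2*t| ^ (1/q) * |f' (φ t)| / (u t)^2)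
            = (|1-2*t| ^ (1/p) * |1-2*t| ^ (1/q)) * |f' (φ t)| / (u t)^2 := by ring
        rw [e4, e3]
        ring
      have hMp : ∫ t in Ioc (0:ℝ) 1, F1 t ^ p = 1/2 := by
        have : ∫ t in Ioc (0:ℝ) 1, F1 t ^ p = ∫ t in Ioc (0:ℝ) 1, |1-2*t| := by
          apply setIntegral_congr_fun measurableSet_Ioc
          intro t _
          show (|1-2*t| ^ (1/p)) ^ p = |1-2*t|
          rw [← Real.rpow_mul (abs_nonneg _), one_div, inv_mul_cancel₀ hp0.ne', Real.rpow_one]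
        rw [this, ← intervalIntegral.integral_of_le zero_le_one, aux_abs_half]
      have hMq : ∫ t in Ioc (0:ℝ) 1, F2 t ^ q = K := by
        rw [hK_def, intervalIntegral.integral_of_le zero_le_one]
        apply setIntegral_congr_fun measurableSet_Ioc
        intro t ht
        have ht' := Ioc_subset_Icc_self ht
        show ((|1-2*t| * |f' (φ t)| ^ q / (u t) ^ (2*q)) ^ (1/q)) ^ q = _
        rw [← Real.rpow_mul (hinner_nonneg t ht'), one_div, inv_mul_cancel₀ hq0', Real.rpow_one]
      rw [hL, hMp, hMq] at hH
      have hpe : (1/2:ℝ)^(1/p) = (1/2:ℝ)^(1-1/q) := by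
        congr 1
        have := (Real.holderConjugate_iff.mp hpq).2
        rw [one_div, one_div]
        linarith
      rwa [hpe] at hH
  -- final assembly
  have hfin : (1/2:ℝ) ^ (1 - 1/q) * (a*b*(b-a)/2)
      = a * b * (b - a) / 2 ^ (2 - 1 / q) := by
    have h2 : (2:ℝ)^(2-1/q) = 2 * (2:ℝ)^(1-1/q) := by
      rw [show (2:ℝ)-1/q = 1 + (1-1/q) by ring, Real.rpow_add two_pos, Real.rpow_one]
    have h3 : (1/2:ℝ)^(1-1/q) = ((2:ℝ)^(1-1/q))⁻¹ := by
      rw [one_div, Real.inv_rpow (by norm_num : (0:ℝ) ≤ 2)]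
    have hpow_pos : (0:ℝ) < (2:ℝ)^(1-1/q) := Real.rpow_pos_of_pos two_pos _
    rw [h2, h3]
    field_simp
  calc |(f a + f b)/2 - a*b/(b-a) * R|
      = a*b*(b-a)/2 * |I| := by
        rw [hIdent, abs_mul, abs_of_nonneg (by positivity : (0:ℝ) ≤ a*b*(b-a)/2)]
    _ ≤ a*b*(b-a)/2 * ((1/2:ℝ) ^ (1 - 1/q) * K ^ (1/q)) :=
        mul_le_mul_of_nonneg_left (hJ.trans hHolder) (by positivity)
    _ ≤ a*b*(b-a)/2 * ((1/2:ℝ) ^ (1 - 1/q) * (ρ1 * A + m * ρ2 * B) ^ (1/q)) := by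
        apply mul_le_mul_of_nonneg_left _ (by positivity)
        apply mul_le_mul_of_nonneg_left _ (by positivity)
        exact Real.rpow_le_rpow hK0 hKX (by positivity)
    _ = a * b * (b - a) / 2 ^ (2 - 1 / q) * (ρ1 * A + m * ρ2 * B) ^ (1/q) := by
        rw [← hfin]; ring
end

section
/- Let f : I ⊂ (0,∞) → ℝ be differentiable, 0 < a < b, m ∈ (0,1], s ∈ (0,1], q > 1 with 1/p + 1/q = 1, f' integrable on [a,b], and |f'|^q harmonically (s,m)-convex in the second sense on [a, b/m]. Then |(f(a)+f(b))/2 − (ab/(b−a))∫_a^b f(x)/x² dx| ≤ (ab(b−a)/2)·(1/(p+1))^{1/p}·[ν₁|f'(a)|^q + m ν₂|f'(b/m)|^q]^{1/q}, where ν₁ = ∫_0^1 t^s/(tb+(1−t)a)^{2q} dt and ν₂ = ∫_0^1 (1−t)^s/(tb+(1−t)a)^{2q} dt. -/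
open MeasureTheory intervalIntegral

/-- ∫₀¹ |1-2t|^p dt = 1/(p+1) -/
private lemma aux_abs_int (p : ℝ) (hp : 0 < p) :
    ∫ t in (0:ℝ)..1, |1-2*t|^p = 1/(p+1) := by
  have hcont : Continuous fun t : ℝ => |1-2*t| ^ p :=
    (continuous_const.sub (continuous_const.mul continuous_id)).abs.rpow_const
      (fun x => Or.inr hp.le)
  have hx01 : ∫ x in (0:ℝ)..1, |x| ^ p = 1/(p+1) := by
    rw [intervalIntegral.integral_congr (g := fun x : ℝ => x ^ p)
      (by intro x hx; rw [Set.uIcc_of_le (by norm_num : (0:ℝ) ≤ 1)] at hx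
          simp [abs_of_nonneg hx.1])]
    rw [integral_rpow (Or.inl (by linarith))]
    rw [Real.one_rpow, Real.zero_rpow (by linarith)]
    ring
  have h1 : ∫ t in (0:ℝ)..(1/2:ℝ), |1-2*t|^p = 1/(2*(p+1)) := by
    have key := integral_comp_mul_add (a := (0:ℝ)) (b := (1/2:ℝ))
      (f := fun x : ℝ => |x| ^ p) (c := (-2:ℝ)) (by norm_num) 1
    have heq : (∫ t in (0:ℝ)..(1/2:ℝ), |1-2*t|^p)
        = ∫ t in (0:ℝ)..(1/2:ℝ), |(-2)*t+1|^p := by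
      apply intervalIntegral.integral_congr; intro x _; ring_nf
    rw [heq, key]
    norm_num
    rw [intervalIntegral.integral_symm, hx01]
    ring
  have h2 : ∫ t in (1/2:ℝ)..1, |1-2*t|^p = 1/(2*(p+1)) := by
    have key := integral_comp_mul_add (a := (1/2:ℝ)) (b := (1:ℝ))
      (f := fun x : ℝ => |x| ^ p) (c := (-2:ℝ)) (by norm_num) 1
    have heq : (∫ t in (1/2:ℝ)..1, |1-2*t|^p)
        = ∫ t in (1/2:ℝ)..1, |(-2)*t+1|^p := by
      apply intervalIntegral.integral_congr; intro x _; ring_nf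
    have habs : ∫ x in (0:ℝ)..(-1:ℝ), |x| ^ p = -(1/(p+1)) := by
      rw [intervalIntegral.integral_symm]
      have h3 : (∫ x in (0:ℝ)..(1:ℝ), |(-x)| ^ p) = ∫ x in (-(1:ℝ))..(-(0:ℝ)), |x| ^ p :=
        intervalIntegral.integral_comp_neg (a := (0:ℝ)) (b := (1:ℝ)) (f := fun x => |x| ^ p)
      norm_num [abs_neg] at h3
      rw [← h3, hx01]
    rw [heq, key]
    norm_num
    rw [habs]
    ring
  have hpne : p + 1 ≠ 0 := by positivity
  rw [← intervalIntegral.integral_add_adjacent_intervals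
    (hcont.intervalIntegrable 0 (1/2)) (hcont.intervalIntegrable (1/2) 1), h1, h2]
  field_simp
  norm_num

/-- A function that is a.e. equal (on (0,1]) to a measurable function and bounded there is
in every `ℒr` space w.r.t. the restricted measure. -/
private lemma aux_memLp {F G : ℝ → ℝ} {C : ℝ} (r : ENNReal)
    (hG : Measurable G) (hae : ∀ t ∈ Set.Ioc (0:ℝ) 1, F t = G t)
    (hbd : ∀ t ∈ Set.Ioc (0:ℝ) 1, |F t| ≤ C) :
    MemLp F r (volume.restrict (Set.Ioc (0:ℝ) 1)) := by
  have hfin : IsFiniteMeasure (volume.restrict (Set.Ioc (0:ℝ) 1)) :=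
    ⟨by rw [Measure.restrict_apply_univ]; simp [Real.volume_Ioc]⟩
  have hmeas : AEStronglyMeasurable F (volume.restrict (Set.Ioc (0:ℝ) 1)) := by
    refine hG.aestronglyMeasurable.congr ?_
    filter_upwards [ae_restrict_mem measurableSet_Ioc] with t ht
    exact (hae t ht).symm
  exact MemLp.of_bound hmeas C
    (by filter_upwards [ae_restrict_mem measurableSet_Ioc] with t ht
        simpa using hbd t ht)

private lemma aux_intervalIntegrable {F G : ℝ → ℝ} {C : ℝ}
    (hG : Measurable G) (hae : ∀ t ∈ Set.Ioc (0:ℝ) 1, F t = G t)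
    (hbd : ∀ t ∈ Set.Ioc (0:ℝ) 1, |F t| ≤ C) :
    IntervalIntegrable F volume 0 1 := by
  rw [intervalIntegrable_iff, Set.uIoc_of_le zero_le_one]
  have hfin : IsFiniteMeasure (volume.restrict (Set.Ioc (0:ℝ) 1)) :=
    ⟨by rw [Measure.restrict_apply_univ]; simp [Real.volume_Ioc]⟩
  exact memLp_one_iff_integrable.mp (aux_memLp 1 hG hae hbd)

set_option maxHeartbeats 2000000 in
theorem HH_bound_holder_sm
    (a b m s p q : ℝ) (ha : 0 < a) (hab : a < b)
    (hm : m ∈ Set.Ioc (0:ℝ) 1) (hs : s ∈ Set.Ioc (0:ℝ) 1)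
    (hq : 1 < q) (hpq : 1 / p + 1 / q = 1)
    (f f' : ℝ → ℝ)
    (hderiv : ∀ x ∈ Set.Icc a (b / m), HasDerivAt f (f' x) x)
    (hint : IntervalIntegrable f' volume a b)
    (hconv : ∀ x ∈ Set.Icc a (b / m), ∀ y ∈ Set.Icc a (b / m), ∀ t ∈ Set.Icc (0:ℝ) 1,
      |f' (m * x * y / (m * t * y + (1 - t) * x))| ^ q ≤
        t ^ s * |f' x| ^ q + m * (1 - t) ^ s * |f' y| ^ q) :
    |(f a + f b) / 2 - a * b / (b - a) * ∫ x in a..b, f x / x ^ 2| ≤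
      a * b * (b - a) / 2 * (1 / (p + 1)) ^ (1 / p) *
        ((∫ t in (0:ℝ)..1, t ^ s / (t * b + (1 - t) * a) ^ (2 * q)) * |f' a| ^ q +
          m * (∫ t in (0:ℝ)..1, (1 - t) ^ s / (t * b + (1 - t) * a) ^ (2 * q)) *
            |f' (b / m)| ^ q) ^ (1 / q) := by
  obtain ⟨hm0, hm1⟩ := hm
  obtain ⟨hs0, hs1⟩ := hs
  have hb : 0 < b := ha.trans hab
  have hba : 0 < b - a := sub_pos.mpr hab
  have hq0 : 0 < q := lt_trans one_pos hq
  have hq1 : 1/q < 1 := by rw [div_lt_one hq0]; exact hq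
  have hq2 : 0 < 1/q := by positivity
  have hp0 : 0 < p := one_div_pos.mp (by linarith)
  have hp1 : 1 < p := by
    have h : 1/p < 1 := by linarith
    rwa [div_lt_one hp0] at h
  have hpq' : p.HolderConjugate q := Real.holderConjugate_iff.mpr ⟨hp1, by rw [← one_div, ← one_div]; exact hpq⟩
  have hbm : b ≤ b / m := by
    rw [le_div_iff₀ hm0]; nlinarith
  have hDpos : ∀ t ∈ Set.Icc (0:ℝ) 1, 0 < t * b + (1 - t) * a := by
    intro t ht; nlinarith [ht.1, ht.2]
  have hDa : ∀ t ∈ Set.Icc (0:ℝ) 1, a ≤ t * b + (1 - t) * a := by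
    intro t ht; nlinarith [ht.1, ht.2]
  have hDb : ∀ t ∈ Set.Icc (0:ℝ) 1, t * b + (1 - t) * a ≤ b := by
    intro t ht; nlinarith [ht.1, ht.2]
  set L : ℝ → ℝ := fun t => a * b / (t * b + (1 - t) * a) with hLdef
  have hLmem : ∀ t ∈ Set.Icc (0:ℝ) 1, L t ∈ Set.Icc a b := by
    intro t ht
    have hD := hDpos t ht
    constructor
    · rw [hLdef]; dsimp only; rw [le_div_iff₀ hD]; nlinarith [hDb t ht]
    · rw [hLdef]; dsimp only; rw [div_le_iff₀ hD]; nlinarith [hDa t ht]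
  have hLmem' : ∀ t ∈ Set.Icc (0:ℝ) 1, L t ∈ Set.Icc a (b / m) := fun t ht =>
    ⟨(hLmem t ht).1, le_trans (hLmem t ht).2 hbm⟩
  have hL0 : L 0 = b := by
    rw [hLdef]; dsimp only; rw [zero_mul, sub_zero, one_mul, zero_add,
      mul_comm, mul_div_assoc, div_self ha.ne', mul_one]
  have hL1 : L 1 = a := by
    rw [hLdef]; dsimp only; norm_num
    rw [mul_div_assoc, div_self hb.ne', mul_one]
  have hDderiv : ∀ t : ℝ, HasDerivAt (fun u : ℝ => u * b + (1 - u) * a) (b - a) t := by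
    intro t
    have h := ((hasDerivAt_id t).mul_const b).add
      (((hasDerivAt_const t (1:ℝ)).sub (hasDerivAt_id t)).mul_const a)
    exact h.congr_deriv (by ring)
  have hLderiv : ∀ t ∈ Set.Icc (0:ℝ) 1,
      HasDerivAt L (-(a*b*(b-a)) / (t*b+(1-t)*a)^2) t := by
    intro t ht
    have h := (hasDerivAt_const t (a*b)).div (hDderiv t) (hDpos t ht).ne'
    exact h.congr_deriv (by ring)
  have hfc : ContinuousOn f (Set.Icc a (b/m)) := fun x hx =>
    (hderiv x hx).continuousAt.continuousWithinAt
  have hIab : Set.Icc a b ⊆ Set.Icc a (b/m) := Set.Icc_subset_Icc le_rfl hbm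
  have hDcont : Continuous (fun t : ℝ => t * b + (1 - t) * a) :=
    (continuous_id.mul continuous_const).add ((continuous_const.sub continuous_id).mul
      continuous_const)
  -- Substitution identity
  have hA : (∫ t in (0:ℝ)..1, f (L t)) = a*b/(b-a) * ∫ x in a..b, f x / x^2 := by
    have hsub := intervalIntegral.integral_comp_mul_deriv' (a := (0:ℝ)) (b := 1)
      (f := L) (f' := fun t => -(a*b*(b-a)) / (t*b+(1-t)*a)^2)
      (g := fun x => f x / x^2)
      (by intro x hx; rw [Set.uIcc_of_le zero_le_one] at hx; exact hLderiv x hx)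
      (by rw [Set.uIcc_of_le zero_le_one]
          exact ContinuousOn.div continuousOn_const ((hDcont.pow 2).continuousOn)
            (fun t ht => pow_ne_zero 2 (hDpos t ht).ne'))
      (by rw [Set.uIcc_of_le zero_le_one]
          have himg : L '' Set.Icc 0 1 ⊆ Set.Icc a b := by
            rintro x ⟨t, ht, rfl⟩; exact hLmem t ht
          refine ContinuousOn.mono ?_ himg
          exact ContinuousOn.div (hfc.mono hIab) ((continuous_id.pow 2).continuousOn)
            (fun x hx => pow_ne_zero 2 (ne_of_gt (lt_of_lt_of_le ha hx.1))))
    rw [hL0, hL1] at hsub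
    simp only [Function.comp] at hsub
    have e1 : (∫ t in (0:ℝ)..1, f (L t) / (L t)^2 * (-(a*b*(b-a)) / (t*b+(1-t)*a)^2))
        = ∫ t in (0:ℝ)..1, f (L t) * (-(b-a)/(a*b)) := by
      apply intervalIntegral.integral_congr
      intro t ht
      rw [Set.uIcc_of_le zero_le_one] at ht
      have hD := hDpos t ht
      rw [hLdef]; dsimp only
      generalize f (a * b / (t * b + (1 - t) * a)) = y
      have hD' := hD.ne'
      generalize t * b + (1 - t) * a = D at hD' ⊢
      field_simp
    rw [e1, intervalIntegral.integral_mul_const, intervalIntegral.integral_symm a b] at hsub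
    have hy := hsub
    field_simp at hy ⊢
    linarith [hy]
  -- pointwise convexity bound
  set A1 := |f' a| ^ q with hA1def
  set A2 := |f' (b/m)| ^ q with hA2def
  have hamem : a ∈ Set.Icc a (b/m) := ⟨le_rfl, le_trans hab.le hbm⟩
  have hbmmem : b/m ∈ Set.Icc a (b/m) := ⟨le_trans hab.le hbm, le_rfl⟩
  have hptw : ∀ t ∈ Set.Icc (0:ℝ) 1,
      |f' (L t)| ^ q ≤ t^s * A1 + m * (1-t)^s * A2 := by
    intro t ht
    have h := hconv a hamem (b/m) hbmmem t ht
    have h1 : m * a * (b/m) = a * b := by field_simp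
    have h2 : m * t * (b/m) + (1-t)*a = t*b + (1-t)*a := by
      have : m * t * (b/m) = t * b := by field_simp
      rw [this]
    rw [h1, h2] at h
    exact h
  have hA1nn : 0 ≤ A1 := Real.rpow_nonneg (abs_nonneg _) _
  have hA2nn : 0 ≤ A2 := Real.rpow_nonneg (abs_nonneg _) _
  have hCq : ∀ t ∈ Set.Icc (0:ℝ) 1, |f' (L t)| ≤ (A1 + m * A2) ^ (1/q) := by
    intro t ht
    have h1 : |f' (L t)| ^ q ≤ A1 + m * A2 := by
      have hts : t ^ s ≤ 1 := Real.rpow_le_one ht.1 ht.2 hs0.le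
      have hts0 : 0 ≤ t ^ s := Real.rpow_nonneg ht.1 _
      have h1s : (1-t) ^ s ≤ 1 := Real.rpow_le_one (by linarith [ht.2]) (by linarith [ht.1]) hs0.le
      have h1s0 : 0 ≤ (1-t) ^ s := Real.rpow_nonneg (by linarith [ht.2]) _
      nlinarith [hptw t ht, mul_le_mul_of_nonneg_right hts hA1nn,
        mul_le_mul_of_nonneg_left (mul_le_mul_of_nonneg_right h1s hA2nn) hm0.le]
    have h2 : (|f' (L t)| ^ q) ^ (1/q) ≤ (A1 + m * A2) ^ (1/q) :=
      Real.rpow_le_rpow (Real.rpow_nonneg (abs_nonneg _) _) h1 hq2.le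
    rwa [← Real.rpow_mul (abs_nonneg _), mul_one_div, div_self hq0.ne', Real.rpow_one] at h2
  -- interval integrability of v'
  have hLmeas : Measurable L := by
    rw [hLdef]; exact measurable_const.div hDcont.measurable
  have haeLv : ∀ t ∈ Set.Ioc (0:ℝ) 1, f' (L t) = deriv f (L t) := fun t ht =>
    ((hderiv (L t) (hLmem' t (Set.Ioc_subset_Icc_self ht))).deriv).symm
  have hvint : IntervalIntegrable
      (fun t => f' (L t) * (-(a*b*(b-a)) / (t*b+(1-t)*a)^2)) volume 0 1 := by
    refine aux_intervalIntegrable (C := (A1 + m * A2) ^ (1/q) * (a*b*(b-a)/a^2))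
      (G := fun t => deriv f (L t) * (-(a*b*(b-a)) / (t*b+(1-t)*a)^2))
      (((measurable_deriv f).comp hLmeas).mul
        (measurable_const.div (hDcont.measurable.pow_const 2))) ?_ ?_
    · intro t ht; rw [haeLv t ht]
    · intro t ht
      have ht' := Set.Ioc_subset_Icc_self ht
      have hD := hDpos t ht'
      rw [abs_mul, abs_div, abs_of_pos (pow_pos hD 2), abs_neg,
        abs_of_pos (by positivity : (0:ℝ) < a*b*(b-a))]
      have h1 : a^2 ≤ (t*b+(1-t)*a)^2 := by nlinarith [hDa t ht']
      have h2 : a*b*(b-a) / (t*b+(1-t)*a)^2 ≤ a*b*(b-a)/a^2 :=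
        div_le_div_of_nonneg_left (by positivity) (by positivity) h1
      have h3 := hCq t ht'
      have h4 : (0:ℝ) ≤ (A1 + m * A2) ^ (1/q) := Real.rpow_nonneg (by positivity) _
      nlinarith [abs_nonneg (f' (L t)), div_nonneg (by positivity : (0:ℝ) ≤ a*b*(b-a))
        (by positivity : (0:ℝ) ≤ (t*b+(1-t)*a)^2)]
  -- integration by parts
  have hu : ∀ x ∈ Set.uIcc (0:ℝ) 1, HasDerivAt (fun t : ℝ => (1-2*t)/2) (-1) x := by
    intro x _
    have h := (((hasDerivAt_const x (1:ℝ)).sub ((hasDerivAt_id x).const_mul 2))).div_const 2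
    exact h.congr_deriv (by norm_num)
  have hv : ∀ x ∈ Set.uIcc (0:ℝ) 1,
      HasDerivAt (fun t => f (L t)) (f' (L x) * (-(a*b*(b-a)) / (x*b+(1-x)*a)^2)) x := by
    intro x hx
    rw [Set.uIcc_of_le zero_le_one] at hx
    exact (hderiv (L x) (hLmem' x hx)).comp x (hLderiv x hx)
  have hIBP := intervalIntegral.integral_mul_deriv_eq_deriv_mul hu hv
    (intervalIntegrable_const) hvint
  rw [hL0, hL1] at hIBP
  rw [intervalIntegral.integral_const_mul] at hIBP
  -- key identity
  have e4 : ∫ t in (0:ℝ)..1,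
      ((1-2*t)/2) * (f' (L t) * (-(a*b*(b-a)) / (t*b+(1-t)*a)^2))
      = -(a*b*(b-a)/2) * ∫ t in (0:ℝ)..1, (1-2*t) * (f' (L t) / (t*b+(1-t)*a)^2) := by
    rw [← intervalIntegral.integral_const_mul]
    apply intervalIntegral.integral_congr
    intro t ht; ring
  rw [e4] at hIBP
  have hkey : (f a + f b)/2 - a*b/(b-a) * ∫ x in a..b, f x / x^2
      = (a*b*(b-a)/2) * ∫ t in (0:ℝ)..1, (1-2*t) * (f' (L t) / (t*b+(1-t)*a)^2) := by
    have h5 : ((1:ℝ)-2*1)/2 = -(1/2) := by norm_num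
    have h6 : ((1:ℝ)-2*0)/2 = 1/2 := by norm_num
    rw [h5, h6] at hIBP
    rw [← hA]
    linarith [hIBP]
  -- Hölder
  set μ : Measure ℝ := volume.restrict (Set.Ioc (0:ℝ) 1) with hμdef
  have hC0nn : (0:ℝ) ≤ (A1 + m * A2) ^ (1/q) := Real.rpow_nonneg (by positivity) _
  have hGmem : MemLp (fun t => f' (L t) / (t*b+(1-t)*a)^2) (ENNReal.ofReal q) μ := by
    rw [hμdef]
    refine aux_memLp (C := (A1 + m * A2) ^ (1/q) / a^2) _
      (G := fun t => deriv f (L t) / (t*b+(1-t)*a)^2)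
      (((measurable_deriv f).comp hLmeas).div (hDcont.measurable.pow_const 2)) ?_ ?_
    · intro t ht; rw [haeLv t ht]
    · intro t ht
      have ht' := Set.Ioc_subset_Icc_self ht
      have hD := hDpos t ht'
      rw [abs_div, abs_of_pos (pow_pos hD 2)]
      have h1 : a^2 ≤ (t*b+(1-t)*a)^2 := by nlinarith [hDa t ht']
      exact div_le_div₀ hC0nn (hCq t ht') (by positivity) h1
  have humem : MemLp (fun t : ℝ => 1-2*t) (ENNReal.ofReal p) μ := by
    rw [hμdef]
    refine aux_memLp (C := 1) _ (G := fun t : ℝ => 1-2*t)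
      (measurable_const.sub (measurable_id.const_mul 2)) (fun _ _ => rfl) ?_
    intro t ht
    rw [abs_le]; constructor <;> nlinarith [ht.1, ht.2]
  have hHold := MeasureTheory.integral_mul_norm_le_Lp_mul_Lq hpq' humem hGmem
  have hup : (∫ t, ‖1-2*t‖^p ∂μ) = 1/(p+1) := by
    rw [hμdef, ← intervalIntegral.integral_of_le zero_le_one]
    simp only [Real.norm_eq_abs]
    exact aux_abs_int p hp0
  rw [hup] at hHold
  have hmain : |∫ t in (0:ℝ)..1, (1-2*t) * (f' (L t) / (t*b+(1-t)*a)^2)|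
      ≤ (1/(p+1))^(1/p) * (∫ t, ‖f' (L t) / (t*b+(1-t)*a)^2‖^q ∂μ)^(1/q) := by
    have h1 : |∫ t in (0:ℝ)..1, (1-2*t) * (f' (L t) / (t*b+(1-t)*a)^2)|
        ≤ ∫ t in (0:ℝ)..1, |(1-2*t) * (f' (L t) / (t*b+(1-t)*a)^2)| :=
      intervalIntegral.abs_integral_le_integral_abs zero_le_one
    have h2 : (∫ t in (0:ℝ)..1, |(1-2*t) * (f' (L t) / (t*b+(1-t)*a)^2)|)
        = ∫ t, ‖1-2*t‖ * ‖f' (L t) / (t*b+(1-t)*a)^2‖ ∂μ := by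
      rw [hμdef, ← intervalIntegral.integral_of_le zero_le_one]
      apply intervalIntegral.integral_congr
      intro t _
      simp only [Real.norm_eq_abs]
      exact abs_mul _ _
    rw [h2] at h1
    exact le_trans h1 hHold
  -- bound the q-integral
  have hconv2 : ∀ t ∈ Set.Icc (0:ℝ) 1, ‖f' (L t) / (t*b+(1-t)*a)^2‖^q
      ≤ t^s/(t*b+(1-t)*a)^(2*q) * A1 + ((1-t)^s/(t*b+(1-t)*a)^(2*q)) * (m * A2) := by
    intro t ht
    have hD := hDpos t ht
    have hDq : (0:ℝ) < (t*b+(1-t)*a) ^ (2*q) := Real.rpow_pos_of_pos hD _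
    have hpow : (((t*b+(1-t)*a))^2 : ℝ) ^ q = (t*b+(1-t)*a) ^ (2*q) := by
      rw [← Real.rpow_natCast (t*b+(1-t)*a) 2, ← Real.rpow_mul hD.le]
      norm_num
    rw [Real.norm_eq_abs, abs_div, abs_of_pos (pow_pos hD 2),
      Real.div_rpow (abs_nonneg _) (pow_nonneg hD.le 2), hpow]
    have h5 := (div_le_div_iff_of_pos_right hDq).mpr (hptw t ht)
    calc |f' (L t)| ^ q / (t*b+(1-t)*a) ^ (2*q)
        ≤ (t^s * A1 + m * (1-t)^s * A2) / (t*b+(1-t)*a) ^ (2*q) := h5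
      _ = t^s/(t*b+(1-t)*a)^(2*q) * A1 + ((1-t)^s/(t*b+(1-t)*a)^(2*q)) * (m * A2) := by
        ring
  have hcontD2q : ContinuousOn (fun t : ℝ => (t*b+(1-t)*a) ^ (2*q)) (Set.Icc 0 1) :=
    hDcont.continuousOn.rpow_const (fun t ht => Or.inl (hDpos t ht).ne')
  have hconts : ContinuousOn (fun t : ℝ => t ^ s) (Set.Icc 0 1) :=
    continuousOn_id.rpow_const (fun t _ => Or.inr hs0.le)
  have hconts' : ContinuousOn (fun t : ℝ => (1-t) ^ s) (Set.Icc 0 1) :=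
    (continuous_const.sub continuous_id).continuousOn.rpow_const (fun t _ => Or.inr hs0.le)
  have hcont1 : ContinuousOn (fun t : ℝ => t^s/(t*b+(1-t)*a)^(2*q)) (Set.Icc 0 1) :=
    hconts.div hcontD2q (fun t ht => (Real.rpow_pos_of_pos (hDpos t ht) _).ne')
  have hcont2 : ContinuousOn (fun t : ℝ => (1-t)^s/(t*b+(1-t)*a)^(2*q)) (Set.Icc 0 1) :=
    hconts'.div hcontD2q (fun t ht => (Real.rpow_pos_of_pos (hDpos t ht) _).ne')
  have hintL : IntervalIntegrable
      (fun t => ‖f' (L t) / (t*b+(1-t)*a)^2‖^q) volume 0 1 := by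
    refine aux_intervalIntegrable (C := ((A1 + m * A2) ^ (1/q) / a^2)^q)
      (G := fun t => |deriv f (L t) / (t*b+(1-t)*a)^2| ^ q)
      (((((measurable_deriv f).comp hLmeas).div
        (hDcont.measurable.pow_const 2)).abs).pow_const q) ?_ ?_
    · intro t ht
      rw [Real.norm_eq_abs, haeLv t ht]
    · intro t ht
      have ht' := Set.Ioc_subset_Icc_self ht
      have hD := hDpos t ht'
      have hb1 : ‖f' (L t) / (t*b+(1-t)*a)^2‖ ≤ (A1 + m * A2) ^ (1/q) / a^2 := by
        rw [Real.norm_eq_abs, abs_div, abs_of_pos (pow_pos hD 2)]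
        have h1 : a^2 ≤ (t*b+(1-t)*a)^2 := by nlinarith [hDa t ht']
        exact div_le_div₀ hC0nn (hCq t ht') (by positivity) h1
      have h2 := Real.rpow_le_rpow (norm_nonneg _) hb1 hq0.le
      rwa [abs_of_nonneg (Real.rpow_nonneg (norm_nonneg _) _)]
  have hintR : IntervalIntegrable
      (fun t : ℝ => t^s/(t*b+(1-t)*a)^(2*q) * A1
        + ((1-t)^s/(t*b+(1-t)*a)^(2*q)) * (m * A2)) volume 0 1 := by
    apply ContinuousOn.intervalIntegrable
    rw [Set.uIcc_of_le zero_le_one]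
    exact (hcont1.mul continuousOn_const).add (hcont2.mul continuousOn_const)
  have hmono := intervalIntegral.integral_mono_on zero_le_one hintL hintR hconv2
  have hsplit : (∫ t in (0:ℝ)..1, (t^s/(t*b+(1-t)*a)^(2*q) * A1
        + ((1-t)^s/(t*b+(1-t)*a)^(2*q)) * (m * A2)))
      = (∫ t in (0:ℝ)..1, t ^ s / (t * b + (1 - t) * a) ^ (2 * q)) * A1 +
          m * (∫ t in (0:ℝ)..1, (1 - t) ^ s / (t * b + (1 - t) * a) ^ (2 * q)) * A2 := by
    rw [intervalIntegral.integral_add, intervalIntegral.integral_mul_const,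
      intervalIntegral.integral_mul_const]
    · ring
    · apply ContinuousOn.intervalIntegrable
      rw [Set.uIcc_of_le zero_le_one]
      exact hcont1.mul continuousOn_const
    · apply ContinuousOn.intervalIntegrable
      rw [Set.uIcc_of_le zero_le_one]
      exact hcont2.mul continuousOn_const
  have hGq : (∫ t, ‖f' (L t) / (t*b+(1-t)*a)^2‖^q ∂μ)
      ≤ (∫ t in (0:ℝ)..1, t ^ s / (t * b + (1 - t) * a) ^ (2 * q)) * A1 +
          m * (∫ t in (0:ℝ)..1, (1 - t) ^ s / (t * b + (1 - t) * a) ^ (2 * q)) * A2 := by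
    rw [← hsplit]
    calc (∫ t, ‖f' (L t) / (t*b+(1-t)*a)^2‖^q ∂μ)
        = ∫ t in (0:ℝ)..1, ‖f' (L t) / (t*b+(1-t)*a)^2‖^q := by
          rw [hμdef, ← intervalIntegral.integral_of_le zero_le_one]
      _ ≤ _ := hmono
  -- final assembly
  have hBnn : (0:ℝ) ≤ ∫ t, ‖f' (L t) / (t*b+(1-t)*a)^2‖^q ∂μ :=
    integral_nonneg (fun t => Real.rpow_nonneg (norm_nonneg _) _)
  have hB := Real.rpow_le_rpow hBnn hGq hq2.le
  have h7 := le_trans hmain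
    (mul_le_mul_of_nonneg_left hB (Real.rpow_nonneg (by positivity) (1/p)))
  rw [hkey, abs_mul, abs_of_pos (show (0:ℝ) < a*b*(b-a)/2 by positivity)]
  calc a*b*(b-a)/2 * |∫ t in (0:ℝ)..1, (1-2*t) * (f' (L t) / (t*b+(1-t)*a)^2)|
      ≤ a*b*(b-a)/2 * ((1/(p+1))^(1/p) *
        ((∫ t in (0:ℝ)..1, t ^ s / (t * b + (1 - t) * a) ^ (2 * q)) * A1 +
          m * (∫ t in (0:ℝ)..1, (1 - t) ^ s / (t * b + (1 - t) * a) ^ (2 * q)) * A2)^(1/q)) :=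
        mul_le_mul_of_nonneg_left h7 (by positivity)
    _ = _ := by ring
end

section
/- Let f : I ⊂ (0,∞) → ℝ be harmonically convex (i.e. f(xy/(tx+(1−t)y)) ≤ t f(y) + (1−t) f(x) for all x,y ∈ I, t ∈ [0,1]), 0 < a < b with [a,b] ⊂ I, f integrable on [a,b]. Then f(2ab/(a+b)) ≤ (ab/(b−a)) ∫_a^b f(x)/x² dx ≤ (f(a)+f(b))/2. -/
open MeasureTheory intervalIntegral

theorem hermite_hadamard_harmonically_convex
    (I : Set ℝ) (hI : I ⊆ Set.Ioi 0)
    (a b : ℝ) (ha : 0 < a) (hab : a < b) (habI : Set.Icc a b ⊆ I)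
    (f : ℝ → ℝ)
    (hconv : ∀ x ∈ I, ∀ y ∈ I, ∀ t ∈ Set.Icc (0:ℝ) 1,
      f (x * y / (t * x + (1 - t) * y)) ≤ t * f y + (1 - t) * f x)
    (hint : IntervalIntegrable f volume a b) :
    f (2 * a * b / (a + b)) ≤ a * b / (b - a) * ∫ x in a..b, f x / x ^ 2 ∧
      a * b / (b - a) * ∫ x in a..b, f x / x ^ 2 ≤ (f a + f b) / 2 := by
  have hb : 0 < b := ha.trans hab
  set c : ℝ := b⁻¹ with hc_def
  set d : ℝ := a⁻¹ with hd_def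
  have hc : 0 < c := by positivity
  have hd : 0 < d := by positivity
  have hcd : c < d := inv_strictAnti₀ ha hab
  set g : ℝ → ℝ := fun u => f u⁻¹ with hg_def
  -- inverse maps Icc c d to Icc a b
  have hmem : ∀ u ∈ Set.Icc c d, u⁻¹ ∈ Set.Icc a b := by
    intro u hu
    obtain ⟨h1, h2⟩ := hu
    have hu0 : 0 < u := lt_of_lt_of_le hc h1
    constructor
    · rw [le_inv_comm₀ ha hu0]; exact h2
    · rw [inv_le_comm₀ hu0 hb]; exact h1
  -- convexity-type inequality for g
  have hg : ∀ u ∈ Set.Icc c d, ∀ v ∈ Set.Icc c d, ∀ t ∈ Set.Icc (0:ℝ) 1,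
      g (t * u + (1 - t) * v) ≤ t * g u + (1 - t) * g v := by
    intro u hu v hv t ht
    have hu0 : 0 < u := lt_of_lt_of_le hc hu.1
    have hv0 : 0 < v := lt_of_lt_of_le hc hv.1
    have hden : 0 < t * u + (1 - t) * v := by
      rcases eq_or_lt_of_le ht.1 with h | h
      · rw [← h]; linarith
      · have h1 := mul_pos h hu0
        have h2 := mul_nonneg (by linarith [ht.2] : (0:ℝ) ≤ 1 - t) hv0.le
        linarith
    have hnum : 0 < t * v⁻¹ + (1 - t) * u⁻¹ := by
      have hvi : 0 < v⁻¹ := by positivity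
      have hui : 0 < u⁻¹ := by positivity
      rcases eq_or_lt_of_le ht.1 with h | h
      · rw [← h]; linarith
      · have h1 := mul_pos h hvi
        have h2 := mul_nonneg (by linarith [ht.2] : (0:ℝ) ≤ 1 - t) hui.le
        linarith
    have key := hconv v⁻¹ (habI (hmem v hv)) u⁻¹ (habI (hmem u hu)) t ht
    have harg : v⁻¹ * u⁻¹ / (t * v⁻¹ + (1 - t) * u⁻¹) = (t * u + (1 - t) * v)⁻¹ := by
      rw [div_eq_iff hnum.ne', eq_comm, inv_mul_eq_div, div_eq_iff hden.ne']
      field_simp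
    rw [harg] at key
    exact key
  -- integrability of f x / x^2 on [a,b]
  have hcont : ContinuousOn (fun x : ℝ => (x ^ 2)⁻¹) (Set.uIcc a b) := by
    apply ContinuousOn.inv₀ (by fun_prop)
    intro x hx
    rw [Set.uIcc_of_le hab.le] at hx
    have : 0 < x := lt_of_lt_of_le ha hx.1
    positivity
  have hint2 : IntervalIntegrable (fun x => f x / x ^ 2) volume a b := by
    simpa [div_eq_mul_inv] using hint.mul_continuousOn hcont
  -- change of variables setup
  have hderiv : ∀ u ∈ Set.Ioo c d, HasDerivWithinAt (fun x : ℝ => x⁻¹)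
      (-(u ^ 2)⁻¹) (Set.Ioo c d) u := by
    intro u hu
    have hu0 : u ≠ 0 := (lt_of_lt_of_le hc hu.1.le).ne'
    exact (hasDerivAt_inv hu0).hasDerivWithinAt
  have hinj : Set.InjOn (fun x : ℝ => x⁻¹) (Set.Ioo c d) := inv_injective.injOn
  have himg : (fun x : ℝ => x⁻¹) '' Set.Ioo c d = Set.Ioo a b := by
    ext x
    constructor
    · rintro ⟨u, hu, rfl⟩
      have hu0 : 0 < u := lt_of_lt_of_le hc hu.1.le
      constructor
      · rw [hd_def] at hu; rw [lt_inv_comm₀ ha hu0]; exact hu.2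
      · rw [hc_def] at hu; rw [inv_lt_comm₀ hu0 hb]; exact hu.1
    · rintro ⟨h1, h2⟩
      have hx0 : 0 < x := ha.trans h1
      refine ⟨x⁻¹, ⟨?_, ?_⟩, inv_inv x⟩
      · rw [hc_def, inv_lt_inv₀ hb hx0]; exact h2
      · rw [hd_def, inv_lt_inv₀ hx0 ha]; exact h1
  have habs : ∀ u ∈ Set.Ioo c d, |(-(u ^ 2)⁻¹)| • ((fun x => f x / x ^ 2) u⁻¹) = g u := by
    intro u hu
    have hu0 : 0 < u := lt_of_lt_of_le hc hu.1.le
    have : |(-(u ^ 2)⁻¹)| = (u ^ 2)⁻¹ := by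
      rw [abs_neg, abs_of_pos]; positivity
    simp only [this, smul_eq_mul]
    field_simp [hg_def]
    rw [hg_def, one_div]
  -- the substitution identity
  have hsub : ∫ x in Set.Ioo a b, f x / x ^ 2 = ∫ u in Set.Ioo c d, g u := by
    rw [← himg, integral_image_eq_integral_abs_deriv_smul measurableSet_Ioo hderiv hinj]
    exact setIntegral_congr_fun measurableSet_Ioo habs
  -- integrability of g
  have hgIntOn : IntegrableOn (fun x => f x / x ^ 2) (Set.Ioo a b) := by
    have := hint2.1
    rw [intervalIntegrable_iff_integrableOn_Ioc_of_le hab.le] at hint2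
    exact hint2.mono_set Set.Ioo_subset_Ioc_self
  have hgint : IntervalIntegrable g volume c d := by
    rw [intervalIntegrable_iff_integrableOn_Ioo_of_le hcd.le]
    have := (integrableOn_image_iff_integrableOn_abs_deriv_smul measurableSet_Ioo hderiv hinj
      (fun x => f x / x ^ 2)).mp (himg ▸ hgIntOn)
    exact this.congr_fun habs measurableSet_Ioo
  -- interval integral equality
  have heq : (∫ x in a..b, f x / x ^ 2) = ∫ u in c..d, g u := by
    rw [integral_of_le hab.le, integral_of_le hcd.le,
      MeasureTheory.integral_Ioc_eq_integral_Ioo, MeasureTheory.integral_Ioc_eq_integral_Ioo]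
    exact hsub
  -- d - c
  have hdc : d - c = (b - a) / (a * b) := by
    rw [hc_def, hd_def, ← one_div, ← one_div, div_sub_div _ _ ha.ne' hb.ne', one_mul, mul_one]
  have hk : 0 < a * b / (b - a) := by
    have : 0 < b - a := by linarith
    positivity
  have hba : b - a ≠ 0 := sub_ne_zero.2 hab.ne'
  have hkdc : a * b / (b - a) * (d - c) = 1 := by
    rw [hdc, div_mul_div_comm, div_eq_one_iff_eq (by positivity)]
    ring
  -- LEFT inequality: (d - c) * g ((c+d)/2) ≤ ∫ u in c..d, g u
  have hrefl : IntervalIntegrable (fun u => g (c + d - u)) volume c d := by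
    have := hgint.comp_sub_left (c + d)
    simpa using this.symm
  have hleft : (d - c) * g ((c + d) / 2) ≤ ∫ u in c..d, g u := by
    have hmono : (∫ _ in c..d, g ((c + d) / 2)) ≤ ∫ u in c..d, (g u + g (c + d - u)) / 2 := by
      apply integral_mono_on hcd.le intervalIntegrable_const
        (((hgint.add hrefl).div_const 2))
      intro u hu
      have hu' : c + d - u ∈ Set.Icc c d := ⟨by linarith [hu.2], by linarith [hu.1]⟩
      have h2 : (1/2 : ℝ) ∈ Set.Icc (0:ℝ) 1 := by norm_num
      have := hg u hu (c + d - u) hu' (1/2) h2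
      have harg : (1/2 : ℝ) * u + (1 - 1/2) * (c + d - u) = (c + d) / 2 := by ring
      rw [harg] at this
      linarith
    have hsym : (∫ u in c..d, g (c + d - u)) = ∫ u in c..d, g u := by
      rw [integral_comp_sub_left g (c + d)]
      norm_num
    have hsum : (∫ u in c..d, (g u + g (c + d - u)) / 2) = ∫ u in c..d, g u := by
      rw [intervalIntegral.integral_div, intervalIntegral.integral_add hgint hrefl, hsym]
      ring
    rw [hsum] at hmono
    simpa [smul_eq_mul, mul_comm] using hmono
  -- RIGHT inequality: ∫ u in c..d, g u ≤ (d - c) * ((g c + g d) / 2)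
  have hright : (∫ u in c..d, g u) ≤ (d - c) * ((g c + g d) / 2) := by
    set k : ℝ := (g d - g c) / (d - c) with hk_def
    have hlin : IntervalIntegrable (fun u => g c + (u - c) * k) volume c d := by
      apply Continuous.intervalIntegrable; fun_prop
    have hmono : (∫ u in c..d, g u) ≤ ∫ u in c..d, (g c + (u - c) * k) := by
      apply integral_mono_on hcd.le hgint hlin
      intro u hu
      set t : ℝ := (u - c) / (d - c) with ht_def
      have hdc0 : (0:ℝ) < d - c := by linarith
      have ht : t ∈ Set.Icc (0:ℝ) 1 := by
        constructor
        · apply div_nonneg (by linarith [hu.1]) hdc0.le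
        · rw [div_le_one hdc0]; linarith [hu.2]
      have hdmem : d ∈ Set.Icc c d := ⟨hcd.le, le_refl d⟩
      have hcmem : c ∈ Set.Icc c d := ⟨le_refl c, hcd.le⟩
      have := hg d hdmem c hcmem t ht
      have harg : t * d + (1 - t) * c = u := by
        rw [ht_def]; field_simp; ring
      rw [harg] at this
      have heq2 : t * g d + (1 - t) * g c = g c + (u - c) * k := by
        rw [ht_def, hk_def]; field_simp; ring
      linarith [heq2 ▸ this]
    have hcomp : (∫ u in c..d, (g c + (u - c) * k)) = (d - c) * ((g c + g d) / 2) := by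
      rw [intervalIntegral.integral_add intervalIntegrable_const (by apply Continuous.intervalIntegrable; fun_prop)]
      have h1 : (∫ u in c..d, (u - c) * k) = ((d - c) ^ 2 / 2) * k := by
        rw [intervalIntegral.integral_mul_const]
        have : (∫ u in c..d, (u - c)) = (d - c) ^ 2 / 2 := by
          rw [intervalIntegral.integral_sub (Continuous.intervalIntegrable (by fun_prop) _ _)
            intervalIntegrable_const, integral_id, intervalIntegral.integral_const]
          simp only [smul_eq_mul]
          ring
        rw [this]
      rw [h1, intervalIntegral.integral_const]
      simp only [smul_eq_mul, hk_def]
      have hdc0 : (d - c) ≠ 0 := by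
        have : (0:ℝ) < d - c := by linarith
        exact this.ne'
      field_simp
      ring
    rw [hcomp] at hmono
    exact hmono
  -- translate back
  have hgm : g ((c + d) / 2) = f (2 * a * b / (a + b)) := by
    have hcd2 : c + d = (a + b) / (a * b) := by
      rw [hc_def, hd_def, ← one_div, ← one_div, div_add_div _ _ hb.ne' ha.ne', one_mul, mul_one]
      rw [add_comm, mul_comm]
    have : ((c + d) / 2)⁻¹ = 2 * a * b / (a + b) := by
      rw [hcd2, div_div, inv_div]
      ring
    rw [hg_def]; simp only; rw [this]
  have hgc : g c = f b := by rw [hg_def]; simp [hc_def]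
  have hgd : g d = f a := by rw [hg_def]; simp [hd_def]
  rw [heq]
  constructor
  · rw [← hgm]
    calc g ((c + d) / 2) = a * b / (b - a) * ((d - c) * g ((c + d) / 2)) := by
          rw [← mul_assoc, hkdc, one_mul]
      _ ≤ a * b / (b - a) * ∫ u in c..d, g u := by
          apply mul_le_mul_of_nonneg_left hleft hk.le
  · calc a * b / (b - a) * ∫ u in c..d, g u
        ≤ a * b / (b - a) * ((d - c) * ((g c + g d) / 2)) := by
          apply mul_le_mul_of_nonneg_left hright hk.le
      _ = (f a + f b) / 2 := by
          rw [← mul_assoc, hkdc, one_mul, hgc, hgd]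
          ring
end

section
/- Let f : I ⊂ (0,∞) → ℝ be harmonically m-convex (i.e. f(mxy/(mty+(1−t)x)) ≤ t f(x) + m(1−t) f(y) for all x,y in the domain, t ∈ [0,1]) with m ∈ (0,1], 0 < a < b, with a, b, a/m, b/m in the domain, f integrable on [a,b]. Then (ab/(b−a)) ∫_a^b f(x)/x² dx ≤ min{ (f(a) + m f(b/m))/2, (f(b) + m f(a/m))/2 }. -/
open MeasureTheory intervalIntegral

lemma hh_int_aux (c d : ℝ) : ∫ t in (0:ℝ)..1, (t * c + (1 - t) * d) = (c + d) / 2 := by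
  have h1 : IntervalIntegrable (fun t : ℝ => t * c) volume 0 1 :=
    (by fun_prop : Continuous fun t : ℝ => t * c).intervalIntegrable 0 1
  have h2 : IntervalIntegrable (fun t : ℝ => (1 - t) * d) volume 0 1 :=
    (by fun_prop : Continuous fun t : ℝ => (1 - t) * d).intervalIntegrable 0 1
  rw [intervalIntegral.integral_add h1 h2, intervalIntegral.integral_mul_const,
    intervalIntegral.integral_mul_const, integral_id]
  have h3 : IntervalIntegrable (fun _ : ℝ => (1:ℝ)) volume 0 1 :=
    intervalIntegrable_const
  have h4 : IntervalIntegrable (fun t : ℝ => t) volume 0 1 :=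
    (continuous_id).intervalIntegrable 0 1
  have : (∫ t in (0:ℝ)..1, (1 - t)) = 1/2 := by
    rw [intervalIntegral.integral_sub h3 h4, integral_id]
    simp
    norm_num
  rw [this]; ring

theorem hermite_hadamard_harmonically_m_convex
    (I : Set ℝ) (hI : I ⊆ Set.Ioi 0)
    (m a b : ℝ) (hm : m ∈ Set.Ioc (0:ℝ) 1) (ha : 0 < a) (hab : a < b)
    (haI : a ∈ I) (hbI : b ∈ I) (hamI : a / m ∈ I) (hbmI : b / m ∈ I)
    (f : ℝ → ℝ)
    (hconv : ∀ x ∈ I, ∀ y ∈ I, ∀ t ∈ Set.Icc (0:ℝ) 1,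
      f (m * x * y / (m * t * y + (1 - t) * x)) ≤ t * f x + m * (1 - t) * f y)
    (hint : IntervalIntegrable f volume a b) :
    a * b / (b - a) * ∫ x in a..b, f x / x ^ 2 ≤
      min ((f a + m * f (b / m)) / 2) ((f b + m * f (a / m)) / 2) := by
  obtain ⟨hm0, hm1⟩ := hm
  have hb : 0 < b := ha.trans hab
  have hba : 0 < b - a := sub_pos.mpr hab
  set g : ℝ → ℝ := fun t => a * b / (a + t * (b - a)) with hg
  set g' : ℝ → ℝ := fun t => -(a * b * (b - a)) / (a + t * (b - a)) ^ 2 with hg'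
  have hu : ∀ t ∈ Set.Icc (0:ℝ) 1, 0 < a + t * (b - a) := by
    intro t ht
    nlinarith [ht.1, ht.2]
  -- derivative
  have hderiv : ∀ t ∈ Set.Icc (0:ℝ) 1,
      HasDerivWithinAt g (g' t) (Set.Icc (0:ℝ) 1) t := by
    intro t ht
    have h1 : HasDerivAt (fun t : ℝ => a + t * (b - a)) (b - a) t := by
      simpa using ((hasDerivAt_id t).mul_const (b - a)).const_add a
    have h2 : HasDerivAt g ((0 * (a + t * (b - a)) - a * b * (b - a)) /
        (a + t * (b - a)) ^ 2) t :=
      (hasDerivAt_const t (a * b)).div h1 (hu t ht).ne'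
    have : (0 * (a + t * (b - a)) - a * b * (b - a)) / (a + t * (b - a)) ^ 2 = g' t := by
      simp [hg']
    exact (this ▸ h2).hasDerivWithinAt
  -- injectivity
  have hinj : Set.InjOn g (Set.Icc (0:ℝ) 1) := by
    intro t1 h1 t2 h2 heq
    have hu1 := hu t1 h1
    have hu2 := hu t2 h2
    have hab0 : (0:ℝ) < a * b := by positivity
    rw [div_eq_div_iff hu1.ne' hu2.ne'] at heq
    have h3 : a + t2 * (b - a) = a + t1 * (b - a) := mul_left_cancel₀ hab0.ne' heq
    have h4 : t2 * (b - a) = t1 * (b - a) := by linarith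
    exact (mul_right_cancel₀ hba.ne' h4).symm
  -- image
  have himage : g '' Set.Icc (0:ℝ) 1 = Set.Icc a b := by
    ext x
    constructor
    · rintro ⟨t, ht, rfl⟩
      have hu1 := hu t ht
      constructor
      · rw [le_div_iff₀ hu1]
        nlinarith [mul_le_mul_of_nonneg_left ht.2 (mul_pos ha hba).le]
      · rw [div_le_iff₀ hu1]
        nlinarith [mul_nonneg (mul_nonneg hb.le ht.1) hba.le]
    · intro hx
      have hx0 : 0 < x := lt_of_lt_of_le ha hx.1
      refine ⟨(a * b / x - a) / (b - a), ⟨?_, ?_⟩, ?_⟩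
      · apply div_nonneg _ hba.le
        rw [sub_nonneg, le_div_iff₀ hx0]
        nlinarith [hx.2]
      · rw [div_le_one hba, sub_le_iff_le_add]
        rw [div_le_iff₀ hx0]
        nlinarith [hx.1]
      · show a * b / (a + (a * b / x - a) / (b - a) * (b - a)) = x
        rw [div_mul_cancel₀ _ hba.ne']
        field_simp
        have hd : a * x + (a * b - x * a) = a * b := by ring
        rw [show x + (b - x) = b by ring, div_self hb.ne']
  -- integrability of f x / x^2 on Icc a b
  have hcont : ContinuousOn (fun x : ℝ => (x ^ 2)⁻¹) (Set.uIcc a b) := by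
    apply ContinuousOn.inv₀ (by fun_prop)
    intro x hx
    rw [Set.uIcc_of_le hab.le] at hx
    have : 0 < x := lt_of_lt_of_le ha hx.1
    positivity
  have hF : IntervalIntegrable (fun x => f x / x ^ 2) volume a b := by
    simpa [div_eq_mul_inv] using hint.mul_continuousOn hcont
  have hFs : IntegrableOn (fun x => f x / x ^ 2) (Set.Icc a b) volume := by
    rw [integrableOn_Icc_iff_integrableOn_Ioc]
    exact (intervalIntegrable_iff_integrableOn_Ioc_of_le hab.le).mp hF
  -- pointwise simplification of |g'| • (f (g t) / (g t)^2)
  have hpt : ∀ t ∈ Set.Icc (0:ℝ) 1,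
      |g' t| • (f (g t) / (g t) ^ 2) = (b - a) / (a * b) * f (g t) := by
    intro t ht
    have hu1 := hu t ht
    have habs : |g' t| = a * b * (b - a) / (a + t * (b - a)) ^ 2 := by
      rw [hg']
      rw [abs_div, abs_neg, abs_of_pos (by positivity : (0:ℝ) < a * b * (b - a)),
        abs_of_pos (by positivity : (0:ℝ) < (a + t * (b - a)) ^ 2)]
    rw [habs]
    have hgt : g t = a * b / (a + t * (b - a)) := rfl
    rw [hgt, smul_eq_mul]
    have hab0 : (0:ℝ) < a * b := by positivity
    generalize f (a * b / (a + t * (b - a))) = y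
    generalize a + t * (b - a) = u at hu1 ⊢
    field_simp
  -- change of variables
  have hchange : ∫ x in Set.Icc a b, f x / x ^ 2 =
      ∫ t in Set.Icc (0:ℝ) 1, (b - a) / (a * b) * f (g t) := by
    rw [← himage, integral_image_eq_integral_abs_deriv_smul measurableSet_Icc hderiv hinj]
    exact setIntegral_congr_fun measurableSet_Icc hpt
  -- integrability of f ∘ g
  have hcompi : IntegrableOn (fun t => |g' t| • (f (g t) / (g t) ^ 2))
      (Set.Icc (0:ℝ) 1) volume := by
    exact (integrableOn_image_iff_integrableOn_abs_deriv_smul measurableSet_Icc hderiv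
      hinj (fun x => f x / x ^ 2)).mp (by rw [himage]; exact hFs)
  have hfg : IntegrableOn (fun t => f (g t)) (Set.Icc (0:ℝ) 1) volume := by
    have h1 : IntegrableOn (fun t => (b - a) / (a * b) * f (g t))
        (Set.Icc (0:ℝ) 1) volume :=
      hcompi.congr_fun hpt measurableSet_Icc
    have h2 : IntegrableOn (fun t => a * b / (b - a) * ((b - a) / (a * b) * f (g t)))
        (Set.Icc (0:ℝ) 1) volume := h1.const_mul (a * b / (b - a))
    have hone : a * b / (b - a) * ((b - a) / (a * b)) = 1 := by
      rw [div_mul_div_comm, div_eq_one_iff_eq (by positivity : (b - a) * (a * b) ≠ 0)]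
      ring
    apply h2.congr_fun _ measurableSet_Icc
    intro t _
    show a * b / (b - a) * ((b - a) / (a * b) * f (g t)) = f (g t)
    rw [← mul_assoc, hone, one_mul]
  -- LHS equals ∫ t in Icc 0 1, f (g t)
  have hLHS : a * b / (b - a) * ∫ x in a..b, f x / x ^ 2 =
      ∫ t in Set.Icc (0:ℝ) 1, f (g t) := by
    have hone : a * b / (b - a) * ((b - a) / (a * b)) = 1 := by
      rw [div_mul_div_comm, div_eq_one_iff_eq (by positivity : (b - a) * (a * b) ≠ 0)]
      ring
    rw [intervalIntegral.integral_of_le hab.le, ← integral_Icc_eq_integral_Ioc, hchange,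
      MeasureTheory.integral_const_mul, ← mul_assoc, hone, one_mul]
  rw [hLHS]
  -- the two bounds
  have key : ∀ (c1 c2 : ℝ), IntegrableOn (fun t => t * c1 + (1 - t) * c2)
      (Set.Icc (0:ℝ) 1) volume := by
    intro c1 c2
    exact (by fun_prop : Continuous fun t : ℝ => t * c1 + (1 - t) * c2).integrableOn_Icc
  have hint_eq : ∀ (c1 c2 : ℝ),
      ∫ t in Set.Icc (0:ℝ) 1, (t * c1 + (1 - t) * c2) = (c1 + c2) / 2 := by
    intro c1 c2
    rw [integral_Icc_eq_integral_Ioc, ← intervalIntegral.integral_of_le zero_le_one]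
    exact hh_int_aux c1 c2
  apply le_min
  · -- bound 1
    have hbd : ∀ t ∈ Set.Icc (0:ℝ) 1,
        f (g t) ≤ t * f a + (1 - t) * (m * f (b / m)) := by
      intro t ht
      have h := hconv a haI (b / m) hbmI t ht
      have harg : m * a * (b / m) / (m * t * (b / m) + (1 - t) * a) =
          a * b / (a + t * (b - a)) := by
        have h1 : m * a * (b / m) = a * b := by field_simp
        have h2 : m * t * (b / m) + (1 - t) * a = a + t * (b - a) := by
          field_simp; ring
        rw [h1, h2]
      rw [harg] at h
      calc f (g t) ≤ t * f a + m * (1 - t) * f (b / m) := h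
        _ = t * f a + (1 - t) * (m * f (b / m)) := by ring
    calc (∫ t in Set.Icc (0:ℝ) 1, f (g t))
        ≤ ∫ t in Set.Icc (0:ℝ) 1, (t * f a + (1 - t) * (m * f (b / m))) :=
          setIntegral_mono_on hfg (key _ _) measurableSet_Icc hbd
      _ = (f a + m * f (b / m)) / 2 := hint_eq _ _
  · -- bound 2
    have hbd : ∀ t ∈ Set.Icc (0:ℝ) 1,
        f (g t) ≤ t * (m * f (a / m)) + (1 - t) * f b := by
      intro t ht
      have ht' : (1 - t) ∈ Set.Icc (0:ℝ) 1 := ⟨by linarith [ht.2], by linarith [ht.1]⟩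
      have h := hconv b hbI (a / m) hamI (1 - t) ht'
      have harg : m * b * (a / m) / (m * (1 - t) * (a / m) + (1 - (1 - t)) * b) =
          a * b / (a + t * (b - a)) := by
        have h1 : m * b * (a / m) = a * b := by field_simp
        have h2 : m * (1 - t) * (a / m) + (1 - (1 - t)) * b = a + t * (b - a) := by
          field_simp; ring
        rw [h1, h2]
      rw [harg] at h
      calc f (g t) ≤ (1 - t) * f b + m * (1 - (1 - t)) * f (a / m) := h
        _ = t * (m * f (a / m)) + (1 - t) * f b := by ring
    calc (∫ t in Set.Icc (0:ℝ) 1, f (g t))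
        ≤ ∫ t in Set.Icc (0:ℝ) 1, (t * (m * f (a / m)) + (1 - t) * f b) :=
          setIntegral_mono_on hfg (key _ _) measurableSet_Icc hbd
      _ = (f b + m * f (a / m)) / 2 := by rw [hint_eq]; ring
end

section
/- Let f : I ⊂ (0,∞) → ℝ be differentiable, 0 < a < b, f' integrable on [a,b], and |f'|^q harmonically convex on [a,b] for some q ≥ 1. Then |(f(a)+f(b))/2 − (ab/(b−a))∫_a^b f(x)/x² dx| ≤ (ab(b−a)/2) λ₁^{1−1/q}(λ₂|f'(a)|^q + λ₃|f'(b)|^q)^{1/q}, where λ₁ = 1/(ab) − (2/(b−a)²)·ln((a+b)²/(4ab)), λ₂ = −1/(b(b−a)) + ((3a+b)/(b−a)³)·ln((a+b)²/(4ab)), λ₃ = 1/(a(b−a)) + ((3a+b)/(b−a)³)·ln((a+b)²/(4ab)). -/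
open MeasureTheory intervalIntegral

lemma rat_antideriv (p s r x : ℝ) (hx : x ≠ 0) :
    HasDerivAt (fun y => p * y + s * Real.log y + r / y) (p + s / x - r / x ^ 2) x := by
  have h1 : HasDerivAt (fun y : ℝ => p * y) p x := by
    simpa using (hasDerivAt_id x).const_mul p
  have h2 : HasDerivAt (fun y : ℝ => s * Real.log y) (s / x) x := by
    simpa [div_eq_mul_inv, mul_comm] using (Real.hasDerivAt_log hx).const_mul s
  have h3 : HasDerivAt (fun y : ℝ => r / y) (-r / x ^ 2) x := by
    simpa [div_eq_mul_inv, neg_div, mul_div_assoc, mul_comm] using (hasDerivAt_inv hx).const_mul r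
  have := (h1.add h2).add h3
  refine this.congr_deriv ?_
  ring

lemma integral_rat (p s r l u : ℝ) (hl : 0 < l) (hu : 0 < u) :
    ∫ x in l..u, (p + s / x - r / x ^ 2) =
      (p * u + s * Real.log u + r / u) - (p * l + s * Real.log l + r / l) := by
  have hsub : Set.uIcc l u ⊆ Set.Ioi (0:ℝ) := by
    intro x hx
    have := hx.1
    have h0 : (0:ℝ) < min l u := lt_min hl hu
    exact lt_of_lt_of_le h0 hx.1
  refine integral_eq_sub_of_hasDerivAt (fun x hx => rat_antideriv p s r x (ne_of_gt (hsub hx))) ?_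
  apply ContinuousOn.intervalIntegrable
  refine ContinuousOn.sub (continuousOn_const.add (continuousOn_const.div continuousOn_id
    (fun x hx => ne_of_gt (hsub hx)))) (continuousOn_const.div (continuousOn_pow 2)
    (fun x hx => pow_ne_zero 2 (ne_of_gt (hsub hx))))

lemma abs_integral_eval (a b p s r : ℝ) (ha : 0 < a) (hab : a < b) (w : ℝ → ℝ)
    (hw : ∀ x ∈ Set.Icc a b, 0 ≤ w x)
    (hw2 : ∀ x ∈ Set.Icc a b, ((a + b) - 2 * a * b / x) * w x = p + s / x - r / x ^ 2)
    (hwc : ContinuousOn w (Set.Icc a b)) :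
    ∫ x in a..b, |(a + b) - 2 * a * b / x| * w x =
      (p * a + s * Real.log a + r / a) + (p * b + s * Real.log b + r / b)
        - 2 * (p * (2 * a * b / (a + b)) + s * Real.log (2 * a * b / (a + b))
            + r / (2 * a * b / (a + b))) := by
  have hb : 0 < b := ha.trans hab
  have hsab : 0 < a + b := by linarith
  set c := 2 * a * b / (a + b) with hc
  have hca : a < c := by
    rw [hc, lt_div_iff₀ hsab]; nlinarith
  have hcb : c < b := by
    rw [hc, div_lt_iff₀ hsab]; nlinarith
  have hc0 : 0 < c := ha.trans hca
  have hIcc1 : Set.Icc a c ⊆ Set.Icc a b := Set.Icc_subset_Icc le_rfl hcb.le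
  have hIcc2 : Set.Icc c b ⊆ Set.Icc a b := Set.Icc_subset_Icc hca.le le_rfl
  have hpos : ∀ x ∈ Set.Icc a b, 0 < x := fun x hx => lt_of_lt_of_le ha hx.1
  -- continuity of the full integrand on Icc a b
  have hcont : ContinuousOn (fun x => |(a + b) - 2 * a * b / x| * w x) (Set.Icc a b) := by
    refine ContinuousOn.mul (ContinuousOn.abs ?_) hwc
    exact continuousOn_const.sub (continuousOn_const.div continuousOn_id
      (fun x hx => ne_of_gt (hpos x hx)))
  have hint1 : IntervalIntegrable (fun x => |(a + b) - 2 * a * b / x| * w x) volume a c :=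
    (hcont.mono (by rw [Set.uIcc_of_le hca.le]; exact hIcc1)).intervalIntegrable
  have hint2 : IntervalIntegrable (fun x => |(a + b) - 2 * a * b / x| * w x) volume c b :=
    (hcont.mono (by rw [Set.uIcc_of_le hcb.le]; exact hIcc2)).intervalIntegrable
  rw [← intervalIntegral.integral_add_adjacent_intervals hint1 hint2]
  have e1 : ∫ x in a..c, |(a + b) - 2 * a * b / x| * w x
      = ∫ x in a..c, ((-p) + (-s) / x - (-r) / x ^ 2) := by
    refine intervalIntegral.integral_congr fun x hx => ?_
    rw [Set.uIcc_of_le hca.le] at hx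
    have hx' := hIcc1 hx
    have hx0 : 0 < x := hpos x hx'
    have hxc : x * (a + b) ≤ 2 * a * b := by
      have h2 := (le_div_iff₀ hsab).1 (hc ▸ hx.2)
      linarith
    have hu : (a + b) - 2 * a * b / x ≤ 0 := by
      rw [sub_nonpos, le_div_iff₀ hx0]; nlinarith
    rw [abs_of_nonpos hu]
    have h3 : -((a + b) - 2 * a * b / x) * w x = -(((a + b) - 2 * a * b / x) * w x) := by ring
    rw [h3, hw2 x hx']; ring
  have e2 : ∫ x in c..b, |(a + b) - 2 * a * b / x| * w x
      = ∫ x in c..b, (p + s / x - r / x ^ 2) := by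
    refine intervalIntegral.integral_congr fun x hx => ?_
    rw [Set.uIcc_of_le hcb.le] at hx
    have hx' := hIcc2 hx
    have hx0 : 0 < x := hpos x hx'
    have hxc : 2 * a * b ≤ x * (a + b) := by
      have h2 := (div_le_iff₀ hsab).1 (hc ▸ hx.1)
      linarith
    have hu : 0 ≤ (a + b) - 2 * a * b / x := by
      rw [sub_nonneg, div_le_iff₀ hx0]; nlinarith
    rw [abs_of_nonneg hu, hw2 x hx']
  rw [e1, e2, integral_rat _ _ _ _ _ ha hc0, integral_rat _ _ _ _ _ hc0 hb]
  ring

lemma logc (a b : ℝ) (ha : 0 < a) (hb : 0 < b) :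
    Real.log (2 * a * b / (a + b)) =
      Real.log 2 + Real.log a + Real.log b - Real.log (a + b) := by
  rw [Real.log_div (by positivity) (by positivity), Real.log_mul (by positivity) hb.ne',
    Real.log_mul two_ne_zero ha.ne']

lemma logL (a b : ℝ) (ha : 0 < a) (hb : 0 < b) :
    Real.log ((a + b) ^ 2 / (4 * a * b)) =
      2 * Real.log (a + b) - (2 * Real.log 2 + Real.log a + Real.log b) := by
  rw [Real.log_div (by positivity) (by positivity), Real.log_pow,
    Real.log_mul (by positivity) hb.ne', Real.log_mul (by norm_num) ha.ne',
    show (4:ℝ) = 2 ^ 2 by norm_num, Real.log_pow]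
  push_cast; ring

lemma lamA (a b : ℝ) (ha : 0 < a) (hab : a < b) :
    ∫ x in a..b, |(a + b) - 2 * a * b / x| =
      a * b * (b - a) ^ 2 *
        (1 / (a * b) - 2 / (b - a) ^ 2 * Real.log ((a + b) ^ 2 / (4 * a * b))) := by
  have hb : 0 < b := ha.trans hab
  have h := abs_integral_eval a b (a + b) (-(2 * a * b)) 0 ha hab (fun _ => 1)
    (fun x _ => zero_le_one)
    (fun x hx => by
      have hx0 : (0:ℝ) < x := lt_of_lt_of_le ha hx.1
      field_simp; ring)
    continuousOn_const
  simp only [mul_one] at h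
  rw [h, logc a b ha hb, logL a b ha hb]
  have h1 : b - a ≠ 0 := sub_ne_zero.2 hab.ne'
  have h2 : a + b ≠ 0 := by positivity
  field_simp
  ring

lemma lamB (a b : ℝ) (ha : 0 < a) (hab : a < b) :
    ∫ x in a..b, |(a + b) - 2 * a * b / x| * (a * (b - x) / (x * (b - a))) =
      a * b * (b - a) ^ 2 *
        (-1 / (b * (b - a)) + (3 * a + b) / (b - a) ^ 3 * Real.log ((a + b) ^ 2 / (4 * a * b))) := by
  have hb : 0 < b := ha.trans hab
  have hba : 0 < b - a := sub_pos.2 hab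
  have h1 : b - a ≠ 0 := hba.ne'
  have h2 : a + b ≠ 0 := by positivity
  have h := abs_integral_eval a b (-(a * (a + b) / (b - a))) (a * (3 * a * b + b ^ 2) / (b - a))
    (2 * a ^ 2 * b ^ 2 / (b - a)) ha hab (fun x => a * (b - x) / (x * (b - a)))
    (fun x hx => by
      have hx0 : (0:ℝ) < x := lt_of_lt_of_le ha hx.1
      have : 0 ≤ b - x := sub_nonneg.2 hx.2
      positivity)
    (fun x hx => by
      have hx0 : (0:ℝ) < x := lt_of_lt_of_le ha hx.1
      field_simp; ring)
    (by
      refine ContinuousOn.div (by fun_prop) (by fun_prop) fun x hx => ?_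
      have hx0 : (0:ℝ) < x := lt_of_lt_of_le ha hx.1
      positivity)
  rw [h, logc a b ha hb, logL a b ha hb]
  field_simp
  ring

lemma lamC (a b : ℝ) (ha : 0 < a) (hab : a < b) :
    ∫ x in a..b, |(a + b) - 2 * a * b / x| * (b * (x - a) / (x * (b - a))) =
      a * b * (b - a) ^ 2 *
        (1 / (a * (b - a)) - (a + 3 * b) / (b - a) ^ 3 * Real.log ((a + b) ^ 2 / (4 * a * b))) := by
  have hb : 0 < b := ha.trans hab
  have hba : 0 < b - a := sub_pos.2 hab
  have h1 : b - a ≠ 0 := hba.ne'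
  have h2 : a + b ≠ 0 := by positivity
  have h := abs_integral_eval a b (b * (a + b) / (b - a)) (-(b * (a ^ 2 + 3 * a * b) / (b - a)))
    (-(2 * a ^ 2 * b ^ 2 / (b - a))) ha hab (fun x => b * (x - a) / (x * (b - a)))
    (fun x hx => by
      have hx0 : (0:ℝ) < x := lt_of_lt_of_le ha hx.1
      have : 0 ≤ x - a := sub_nonneg.2 hx.1
      positivity)
    (fun x hx => by
      have hx0 : (0:ℝ) < x := lt_of_lt_of_le ha hx.1
      field_simp; ring)
    (by
      refine ContinuousOn.div (by fun_prop) (by fun_prop) fun x hx => ?_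
      have hx0 : (0:ℝ) < x := lt_of_lt_of_le ha hx.1
      positivity)
  rw [h, logc a b ha hb, logL a b ha hb]
  field_simp
  ring

set_option maxHeartbeats 2000000 in
theorem HH_bound_power_mean_harmonically_convex
    (a b q : ℝ) (ha : 0 < a) (hab : a < b) (hq : 1 ≤ q)
    (f f' : ℝ → ℝ)
    (hderiv : ∀ x ∈ Set.Icc a b, HasDerivAt f (f' x) x)
    (hint : IntervalIntegrable f' volume a b)
    (hconv : ∀ x ∈ Set.Icc a b, ∀ y ∈ Set.Icc a b, ∀ t ∈ Set.Icc (0:ℝ) 1,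
      |f' (x * y / (t * x + (1 - t) * y))| ^ q ≤ t * |f' y| ^ q + (1 - t) * |f' x| ^ q) :
    |(f a + f b) / 2 - a * b / (b - a) * ∫ x in a..b, f x / x ^ 2| ≤
      a * b * (b - a) / 2 *
        (1 / (a * b) - 2 / (b - a) ^ 2 * Real.log ((a + b) ^ 2 / (4 * a * b))) ^ (1 - 1 / q) *
        ((-1 / (b * (b - a)) + (3 * a + b) / (b - a) ^ 3 * Real.log ((a + b) ^ 2 / (4 * a * b))) *
            |f' a| ^ q +
          (1 / (a * (b - a)) + (3 * a + b) / (b - a) ^ 3 * Real.log ((a + b) ^ 2 / (4 * a * b))) *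
            |f' b| ^ q) ^ (1 / q) := by
  have hb : 0 < b := ha.trans hab
  have hba : 0 < b - a := sub_pos.2 hab
  have hq0 : 0 < q := lt_of_lt_of_le one_pos hq
  have huIcc : Set.uIcc a b = Set.Icc a b := Set.uIcc_of_le hab.le
  have hpos : ∀ x ∈ Set.Icc a b, 0 < x := fun x hx => lt_of_lt_of_le ha hx.1
  set L := Real.log ((a + b) ^ 2 / (4 * a * b)) with hLdef
  have hL0 : 0 ≤ L := Real.log_nonneg (by
    rw [le_div_iff₀ (by positivity)]; nlinarith)
  -- notation
  set ψ : ℝ → ℝ := fun x => |(a + b) - 2 * a * b / x| with hψdef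
  set wB : ℝ → ℝ := fun x => a * (b - x) / (x * (b - a)) with hwBdef
  set wC : ℝ → ℝ := fun x => b * (x - a) / (x * (b - a)) with hwCdef
  -- continuity facts
  have hucont : ContinuousOn (fun x => (a + b) - 2 * a * b / x) (Set.Icc a b) :=
    continuousOn_const.sub (continuousOn_const.div continuousOn_id
      (fun x hx => (hpos x hx).ne'))
  have hψcont : ContinuousOn ψ (Set.Icc a b) := hucont.abs
  have hwBcont : ContinuousOn wB (Set.Icc a b) := by
    refine ContinuousOn.div (by fun_prop) (by fun_prop) fun x hx => ?_
    have := hpos x hx; positivity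
  have hwCcont : ContinuousOn wC (Set.Icc a b) := by
    refine ContinuousOn.div (by fun_prop) (by fun_prop) fun x hx => ?_
    have := hpos x hx; positivity
  have hwBnn : ∀ x ∈ Set.Icc a b, 0 ≤ wB x := fun x hx => by
    have h1 := hpos x hx
    have h2 : 0 ≤ b - x := sub_nonneg.2 hx.2
    simp only [hwBdef]; positivity
  have hwCnn : ∀ x ∈ Set.Icc a b, 0 ≤ wC x := fun x hx => by
    have h1 := hpos x hx
    have h2 : 0 ≤ x - a := sub_nonneg.2 hx.1
    simp only [hwCdef]; positivity
  -- step 1 : integration by parts identity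
  have hUderiv : ∀ x ∈ Set.uIcc a b,
      HasDerivAt (fun y => (a + b) - 2 * a * b / y) (2 * a * b / x ^ 2) x := by
    intro x hx
    rw [huIcc] at hx
    have hx0 : x ≠ 0 := (hpos x hx).ne'
    have h := ((hasDerivAt_inv hx0).const_mul (2 * a * b)).const_sub (a + b)
    have heq : (fun y : ℝ => (a + b) - 2 * a * b / y) = fun y => (a + b) - 2 * a * b * y⁻¹ := by
      funext y; rw [div_eq_mul_inv]
    rw [heq]
    refine h.congr_deriv ?_
    field_simp
  have hu'int : IntervalIntegrable (fun x => 2 * a * b / x ^ 2) volume a b := by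
    apply ContinuousOn.intervalIntegrable
    rw [huIcc]
    exact continuousOn_const.div (by fun_prop) fun x hx => pow_ne_zero 2 (hpos x hx).ne'
  have hparts := intervalIntegral.integral_mul_deriv_eq_deriv_mul
    (fun x hx => hUderiv x hx) (fun x hx => hderiv x (huIcc ▸ hx)) hu'int hint
  have hfint : IntervalIntegrable f volume a b := by
    apply ContinuousOn.intervalIntegrable
    rw [huIcc]
    exact fun x hx => ((hderiv x hx).continuousAt.continuousWithinAt)
  set I := ∫ x in a..b, ((a + b) - 2 * a * b / x) * f' x with hIdef
  have hI2 : ∫ x in a..b, (2 * a * b / x ^ 2) * f x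
      = 2 * a * b * ∫ x in a..b, f x / x ^ 2 := by
    rw [← intervalIntegral.integral_const_mul]
    exact intervalIntegral.integral_congr fun x hx => by ring
  have hub : (a + b) - 2 * a * b / b = b - a := by field_simp; ring
  have hua : (a + b) - 2 * a * b / a = a - b := by field_simp; ring
  have hI : I = (b - a) * (f a + f b) - 2 * a * b * ∫ x in a..b, f x / x ^ 2 := by
    rw [hparts, hub, hua, hI2]; ring
  have hmain : (f a + f b) / 2 - a * b / (b - a) * (∫ x in a..b, f x / x ^ 2)
      = I / (2 * (b - a)) := by
    rw [hI]; field_simp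
  rw [hmain, abs_div, abs_of_pos (by positivity : (0:ℝ) < 2 * (b - a))]
  -- step 2 : triangle inequality
  set J := ∫ x in a..b, ψ x * |f' x| with hJdef
  have hJ : |I| ≤ J := by
    refine le_trans (intervalIntegral.abs_integral_le_integral_abs hab.le) (le_of_eq ?_)
    exact intervalIntegral.integral_congr fun x hx => (abs_mul _ _)
  -- pointwise convexity bound
  have hpt : ∀ x ∈ Set.Icc a b, |f' x| ^ q ≤ wB x * |f' a| ^ q + wC x * |f' b| ^ q := by
    intro x hx
    have hx0 : 0 < x := hpos x hx
    set t := a * (b - x) / (x * (b - a)) with htdef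
    have ht0 : 0 ≤ t := by
      have h2 : 0 ≤ b - x := sub_nonneg.2 hx.2
      positivity
    have ht1 : t ≤ 1 := by
      rw [htdef, div_le_one (by positivity)]
      nlinarith [hx.1]
    have hsum : t * b + (1 - t) * a = a * b / x := by
      rw [htdef]; field_simp; ring
    have harg : b * a / (t * b + (1 - t) * a) = x := by
      rw [hsum]; field_simp
    have hc := hconv b ⟨hab.le, le_rfl⟩ a ⟨le_rfl, hab.le⟩ t ⟨ht0, ht1⟩
    rw [harg] at hc
    have h1mt : 1 - t = wC x := by
      rw [htdef, hwCdef]; field_simp; ring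
    have htwB : t = wB x := by rw [htdef, hwBdef]
    rw [h1mt, htwB] at hc
    exact hc
  -- integrability facts
  have hψint : IntervalIntegrable ψ volume a b :=
    (hψcont.mono (huIcc ▸ Set.Subset.rfl)).intervalIntegrable
  have hψf'int : IntervalIntegrable (fun x => ψ x * |f' x|) volume a b := by
    have := (hint.abs).continuousOn_mul (huIcc ▸ hψcont)
    exact this
  have hboundcont : ContinuousOn (fun x => ψ x * (wB x * |f' a| ^ q + wC x * |f' b| ^ q))
      (Set.Icc a b) :=
    hψcont.mul ((hwBcont.mul continuousOn_const).add (hwCcont.mul continuousOn_const))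
  have hboundint : IntervalIntegrable
      (fun x => ψ x * (wB x * |f' a| ^ q + wC x * |f' b| ^ q)) volume a b :=
    (hboundcont.mono (huIcc ▸ Set.Subset.rfl)).intervalIntegrable
  -- measurability
  have hψm : Measurable ψ := by
    have h1 : Measurable fun x : ℝ => (a + b) - 2 * a * b / x := by
      simp only [div_eq_mul_inv]
      exact measurable_const.sub (measurable_inv.const_mul _)
    exact h1.abs
  have hf'm : AEStronglyMeasurable f' (volume.restrict (Set.Ioc a b)) := hint.1.1
  have habsqm : AEMeasurable (fun x => |f' x| ^ q) (volume.restrict (Set.Ioc a b)) :=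
    ((continuous_abs.measurable.comp_aemeasurable hf'm.aemeasurable)).pow aemeasurable_const
  -- integrability of ψ * |f'|^q
  have hMint' : IntegrableOn (fun x => ψ x * |f' x| ^ q) (Set.Ioc a b) volume := by
    refine Integrable.mono' hboundint.1
      ((hψm.aemeasurable.mul habsqm).aestronglyMeasurable) ?_
    refine (ae_restrict_iff' measurableSet_Ioc).2 (ae_of_all _ fun x hx => ?_)
    have hx' : x ∈ Set.Icc a b := Set.Ioc_subset_Icc_self hx
    have hψnn : 0 ≤ ψ x := abs_nonneg _
    rw [Real.norm_eq_abs, abs_of_nonneg (mul_nonneg hψnn (Real.rpow_nonneg (abs_nonneg _) q))]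
    exact mul_le_mul_of_nonneg_left (hpt x hx') hψnn
  have hMII : IntervalIntegrable (fun x => ψ x * |f' x| ^ q) volume a b :=
    (intervalIntegrable_iff_integrableOn_Ioc_of_le hab.le).2 hMint'
  -- abbreviations for the three explicit integrals
  set A := ∫ x in a..b, ψ x with hAdef
  set B := ∫ x in a..b, ψ x * wB x with hBdef
  set C := ∫ x in a..b, ψ x * wC x with hCdef
  set M := ∫ x in a..b, ψ x * |f' x| ^ q with hMdef
  have hψwBint : IntervalIntegrable (fun x => ψ x * wB x) volume a b :=
    ((hψcont.mul hwBcont).mono (huIcc ▸ Set.Subset.rfl)).intervalIntegrable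
  have hψwCint : IntervalIntegrable (fun x => ψ x * wC x) volume a b :=
    ((hψcont.mul hwCcont).mono (huIcc ▸ Set.Subset.rfl)).intervalIntegrable
  -- M ≤ B * |f' a|^q + C * |f' b|^q
  have hMB : M ≤ B * |f' a| ^ q + C * |f' b| ^ q := by
    have step1 : M ≤ ∫ x in a..b, ψ x * (wB x * |f' a| ^ q + wC x * |f' b| ^ q) := by
      refine intervalIntegral.integral_mono_on hab.le hMII hboundint fun x hx => ?_
      exact mul_le_mul_of_nonneg_left (hpt x hx) (abs_nonneg _)
    have step2 : ∫ x in a..b, ψ x * (wB x * |f' a| ^ q + wC x * |f' b| ^ q)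
        = B * |f' a| ^ q + C * |f' b| ^ q := by
      have e : ∫ x in a..b, ψ x * (wB x * |f' a| ^ q + wC x * |f' b| ^ q)
          = ∫ x in a..b, ((ψ x * wB x) * |f' a| ^ q + (ψ x * wC x) * |f' b| ^ q) :=
        intervalIntegral.integral_congr fun x _ => by ring
      rw [e, intervalIntegral.integral_add (hψwBint.mul_const _) (hψwCint.mul_const _),
        intervalIntegral.integral_mul_const, intervalIntegral.integral_mul_const]
    linarith
  -- closed forms
  have hA : A = a * b * (b - a) ^ 2 * (1 / (a * b) - 2 / (b - a) ^ 2 * L) := by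
    rw [hAdef, hψdef, hLdef]
    exact lamA a b ha hab
  have hB : B = a * b * (b - a) ^ 2 * (-1 / (b * (b - a)) + (3 * a + b) / (b - a) ^ 3 * L) := by
    rw [hBdef, hψdef, hwBdef, hLdef]
    exact lamB a b ha hab
  have hC : C = a * b * (b - a) ^ 2 * (1 / (a * (b - a)) - (a + 3 * b) / (b - a) ^ 3 * L) := by
    rw [hCdef, hψdef, hwCdef, hLdef]
    exact lamC a b ha hab
  -- nonnegativity
  have hAnn : 0 ≤ A := intervalIntegral.integral_nonneg hab.le fun x _ => abs_nonneg _
  have hBnn : 0 ≤ B := intervalIntegral.integral_nonneg hab.le fun x hx =>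
    mul_nonneg (abs_nonneg _) (hwBnn x hx)
  have hCnn : 0 ≤ C := intervalIntegral.integral_nonneg hab.le fun x hx =>
    mul_nonneg (abs_nonneg _) (hwCnn x hx)
  have hMnn : 0 ≤ M := intervalIntegral.integral_nonneg hab.le fun x _ =>
    mul_nonneg (abs_nonneg _) (Real.rpow_nonneg (abs_nonneg _) q)
  set K := a * b * (b - a) ^ 2 with hKdef
  have hK : 0 < K := by positivity
  set lam1 := 1 / (a * b) - 2 / (b - a) ^ 2 * L with hlam1def
  set lam2 := -1 / (b * (b - a)) + (3 * a + b) / (b - a) ^ 3 * L with hlam2def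
  set lam3 := 1 / (a * (b - a)) + (3 * a + b) / (b - a) ^ 3 * L with hlam3def
  set lam3' := 1 / (a * (b - a)) - (a + 3 * b) / (b - a) ^ 3 * L with hlam3'def
  have hlamaux : ∀ lam : ℝ, K * lam = A ∨ K * lam = B ∨ K * lam = C → 0 ≤ lam := by
    intro lam hlam
    by_contra hneg
    push_neg at hneg
    have : K * lam < 0 := mul_neg_of_pos_of_neg hK hneg
    rcases hlam with h | h | h <;> rw [h] at this <;> linarith
  have hlam1nn : 0 ≤ lam1 := hlamaux _ (Or.inl hA.symm)
  have hlam2nn : 0 ≤ lam2 := hlamaux _ (Or.inr (Or.inl hB.symm))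
  have hlam3'nn : 0 ≤ lam3' := hlamaux _ (Or.inr (Or.inr hC.symm))
  have hlam33 : lam3' ≤ lam3 := by
    have h : 0 ≤ ((a + 3 * b) / (b - a) ^ 3 + (3 * a + b) / (b - a) ^ 3) * L :=
      mul_nonneg (by positivity) hL0
    rw [hlam3def, hlam3'def]; nlinarith
  have hfa : (0:ℝ) ≤ |f' a| ^ q := Real.rpow_nonneg (abs_nonneg _) q
  have hfb : (0:ℝ) ≤ |f' b| ^ q := Real.rpow_nonneg (abs_nonneg _) q
  set E := B * |f' a| ^ q + C * |f' b| ^ q with hEdef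
  have hEnn : 0 ≤ E := add_nonneg (mul_nonneg hBnn hfa) (mul_nonneg hCnn hfb)
  set X := lam2 * |f' a| ^ q + lam3 * |f' b| ^ q with hXdef
  have hXnn : 0 ≤ X := add_nonneg (mul_nonneg hlam2nn hfa)
    (mul_nonneg (le_trans hlam3'nn hlam33) hfb)
  have hEKX : E ≤ K * X := by
    have h1 : E = K * (lam2 * |f' a| ^ q + lam3' * |f' b| ^ q) := by
      rw [hEdef, hB, hC]; ring
    rw [h1, hXdef]
    have h2 : lam2 * |f' a| ^ q + lam3' * |f' b| ^ q
        ≤ lam2 * |f' a| ^ q + lam3 * |f' b| ^ q :=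
      add_le_add_right (mul_le_mul_of_nonneg_right hlam33 hfb) _
    exact mul_le_mul_of_nonneg_left h2 hK.le
  -- the key Hölder-type inequality
  have key : J ≤ A ^ (1 - 1 / q) * E ^ (1 / q) := by
    rcases eq_or_lt_of_le hq with hq1 | hq1
    · -- q = 1
      have hq1' : q = 1 := hq1.symm
      have hJM : J = M := by
        rw [hJdef, hMdef]
        exact intervalIntegral.integral_congr fun x _ => by rw [hq1', Real.rpow_one]
      have h0 : 1 - 1 / q = 0 := by rw [hq1']; norm_num
      have h1 : 1 / q = 1 := by rw [hq1']; norm_num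
      rw [h0, h1, Real.rpow_zero, Real.rpow_one, one_mul, hJM]
      exact hMB
    · -- q > 1
      set p := Real.conjExponent q with hpdef
      have hpq : p.HolderConjugate q := (Real.HolderConjugate.conjExponent hq1).symm
      have hinvp : 1 / p = 1 - 1 / q := by
        have h := hpq.inv_add_inv_eq_one
        rw [one_div, one_div]; linarith
      have hp0 : (ENNReal.ofReal p) ≠ 0 := by
        rw [Ne, ENNReal.ofReal_eq_zero, not_le]; exact hpq.pos
      have hptop : (ENNReal.ofReal p) ≠ ⊤ := ENNReal.ofReal_ne_top
      have hq0' : (ENNReal.ofReal q) ≠ 0 := by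
        rw [Ne, ENNReal.ofReal_eq_zero, not_le]; exact hq0
      have hqtop : (ENNReal.ofReal q) ≠ ⊤ := ENNReal.ofReal_ne_top
      set μ := volume.restrict (Set.Ioc a b) with hμdef
      set F : ℝ → ℝ := fun x => ψ x ^ ((1:ℝ) / p) with hFdef
      set G : ℝ → ℝ := fun x => ψ x ^ ((1:ℝ) / q) * |f' x| with hGdef
      have hFm : AEStronglyMeasurable F μ :=
        ((hψm.pow measurable_const).aemeasurable).aestronglyMeasurable
      have hGm : AEStronglyMeasurable G μ :=
        (((hψm.pow measurable_const).aemeasurable).mul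
          (continuous_abs.measurable.comp_aemeasurable hf'm.aemeasurable)).aestronglyMeasurable
      have hψInt : Integrable ψ μ := hψint.1
      have hF : MemLp F (ENNReal.ofReal p) μ := by
        rw [← memLp_norm_rpow_iff hFm hp0 hptop, ENNReal.toReal_ofReal hpq.nonneg,
          ENNReal.div_self hp0 hptop, memLp_one_iff_integrable]
        refine hψInt.congr (ae_of_all _ fun x => ?_)
        show ψ x = ‖ψ x ^ ((1:ℝ)/p)‖ ^ p
        rw [Real.norm_eq_abs, abs_of_nonneg (Real.rpow_nonneg (abs_nonneg _) _),
          ← Real.rpow_mul (abs_nonneg _), one_div, inv_mul_cancel₀ hpq.ne_zero,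
          Real.rpow_one]
      have hG : MemLp G (ENNReal.ofReal q) μ := by
        rw [← memLp_norm_rpow_iff hGm hq0' hqtop, ENNReal.toReal_ofReal hq0.le,
          ENNReal.div_self hq0' hqtop, memLp_one_iff_integrable]
        refine hMint'.congr (ae_of_all _ fun x => ?_)
        show ψ x * |f' x| ^ q = ‖ψ x ^ ((1:ℝ)/q) * |f' x|‖ ^ q
        rw [Real.norm_eq_abs,
          abs_of_nonneg (mul_nonneg (Real.rpow_nonneg (abs_nonneg _) _) (abs_nonneg _)),
          Real.mul_rpow (Real.rpow_nonneg (abs_nonneg _) _) (abs_nonneg _),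
          ← Real.rpow_mul (abs_nonneg _), one_div, inv_mul_cancel₀ hq0.ne',
          Real.rpow_one]
      have hFnn : 0 ≤ᵐ[μ] F := ae_of_all _ fun x => Real.rpow_nonneg (abs_nonneg _) _
      have hGnn : 0 ≤ᵐ[μ] G := ae_of_all _ fun x =>
        mul_nonneg (Real.rpow_nonneg (abs_nonneg _) _) (abs_nonneg _)
      have hHolder := MeasureTheory.integral_mul_le_Lp_mul_Lq_of_nonneg hpq hFnn hGnn hF hG
      have hsum1 : 1 / p + 1 / q = 1 := by
        rw [one_div, one_div]; exact hpq.inv_add_inv_eq_one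
      have e1 : ∫ x, F x * G x ∂μ = J := by
        rw [hJdef, intervalIntegral.integral_of_le hab.le]
        refine integral_congr_ae (ae_of_all _ fun x => ?_)
        show ψ x ^ ((1:ℝ)/p) * (ψ x ^ ((1:ℝ)/q) * |f' x|) = ψ x * |f' x|
        rw [← mul_assoc, ← Real.rpow_add' (abs_nonneg _) (by rw [hsum1]; exact one_ne_zero),
          hsum1, Real.rpow_one]
      have e2 : ∫ x, F x ^ p ∂μ = A := by
        rw [hAdef, intervalIntegral.integral_of_le hab.le]
        refine integral_congr_ae (ae_of_all _ fun x => ?_)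
        show (ψ x ^ ((1:ℝ)/p)) ^ p = ψ x
        rw [← Real.rpow_mul (abs_nonneg _), one_div, inv_mul_cancel₀ hpq.ne_zero, Real.rpow_one]
      have e3 : ∫ x, G x ^ q ∂μ = M := by
        rw [hMdef, intervalIntegral.integral_of_le hab.le]
        refine integral_congr_ae (ae_of_all _ fun x => ?_)
        show (ψ x ^ ((1:ℝ)/q) * |f' x|) ^ q = ψ x * |f' x| ^ q
        rw [Real.mul_rpow (Real.rpow_nonneg (abs_nonneg _) _) (abs_nonneg _),
          ← Real.rpow_mul (abs_nonneg _), one_div, inv_mul_cancel₀ hq0.ne', Real.rpow_one]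
      rw [e1, e2, e3, hinvp] at hHolder
      refine hHolder.trans ?_
      exact mul_le_mul_of_nonneg_left
        (Real.rpow_le_rpow hMnn hMB (by positivity)) (Real.rpow_nonneg hAnn _)
  -- final assembly
  have hfinal : A ^ (1 - 1 / q) * E ^ (1 / q) ≤ K * (lam1 ^ (1 - 1 / q) * X ^ (1 / q)) := by
    calc A ^ (1 - 1 / q) * E ^ (1 / q) = (K * lam1) ^ (1 - 1 / q) * E ^ (1 / q) := by rw [hA]
      _ ≤ (K * lam1) ^ (1 - 1 / q) * (K * X) ^ (1 / q) :=
          mul_le_mul_of_nonneg_left (Real.rpow_le_rpow hEnn hEKX (by positivity))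
            (Real.rpow_nonneg (mul_nonneg hK.le hlam1nn) _)
      _ = (K ^ (1 - 1 / q) * K ^ (1 / q)) * (lam1 ^ (1 - 1 / q) * X ^ (1 / q)) := by
          rw [Real.mul_rpow hK.le hlam1nn, Real.mul_rpow hK.le hXnn]; ring
      _ = K * (lam1 ^ (1 - 1 / q) * X ^ (1 / q)) := by
          rw [← Real.rpow_add hK, show (1 - 1 / q) + 1 / q = 1 by ring, Real.rpow_one]
  have h2ba : (0:ℝ) < 2 * (b - a) := by positivity
  calc |I| / (2 * (b - a)) ≤ J / (2 * (b - a)) := by gcongr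
      _ ≤ (A ^ (1 - 1 / q) * E ^ (1 / q)) / (2 * (b - a)) := by gcongr
      _ ≤ (K * (lam1 ^ (1 - 1 / q) * X ^ (1 / q))) / (2 * (b - a)) := by gcongr
      _ = a * b * (b - a) / 2 * lam1 ^ (1 - 1 / q) * X ^ (1 / q) := by
        rw [hKdef]; field_simp
end

section
/- For 0 < a < b, ∫_0^1 |1−2t|/(tb + (1−t)a)² dt = 1/(ab) − (2/(b−a)²) ln((a+b)²/(4ab)). -/
open MeasureTheory intervalIntegral

theorem integral_abs_weight_closed_form (a b : ℝ) (ha : 0 < a) (hab : a < b) :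
    ∫ t in (0:ℝ)..1, |1 - 2 * t| / (t * b + (1 - t) * a) ^ 2 =
      1 / (a * b) - 2 / (b - a) ^ 2 * Real.log ((a + b) ^ 2 / (4 * a * b)) := by
  have hb : 0 < b := ha.trans hab
  have hc : (0:ℝ) < b - a := by linarith
  have hc2 : (b - a) ^ 2 ≠ 0 := by positivity
  have hu : ∀ t : ℝ, t ∈ Set.Icc (0:ℝ) 1 → 0 < t * b + (1 - t) * a := by
    rintro t ⟨h0, h1⟩; nlinarith
  set F : ℝ → ℝ := fun t =>
    -(1 / (b - a) ^ 2) * ((a + b) * (t * b + (1 - t) * a)⁻¹ +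
      2 * Real.log (t * b + (1 - t) * a)) with hF
  have hFderiv : ∀ t ∈ Set.Icc (0:ℝ) 1,
      HasDerivAt F ((1 - 2 * t) / (t * b + (1 - t) * a) ^ 2) t := by
    intro t ht
    have hut := hu t ht
    have hune : t * b + (1 - t) * a ≠ 0 := ne_of_gt hut
    have hU : HasDerivAt (fun t : ℝ => t * b + (1 - t) * a) (b - a) t := by
      have h1 := (hasDerivAt_id t).mul_const b
      have h2 := ((hasDerivAt_const t (1:ℝ)).sub (hasDerivAt_id t)).mul_const a
      exact (h1.add h2).congr_deriv (by ring)
    have hinv := hU.inv hune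
    have hlog := hU.log hune
    have h := ((hinv.const_mul (a + b)).add (hlog.const_mul 2)).const_mul
      (-(1 / (b - a) ^ 2))
    refine h.congr_deriv ?_
    field_simp
    ring
  have hcont : ContinuousOn (fun t : ℝ => |1 - 2 * t| / (t * b + (1 - t) * a) ^ 2)
      (Set.Icc 0 1) := by
    apply ContinuousOn.div
    · exact ((continuous_const.sub (continuous_const.mul continuous_id)).abs).continuousOn
    · exact ((continuous_id.mul continuous_const).add
        ((continuous_const.sub continuous_id).mul continuous_const)).pow 2 |>.continuousOn
    · intro t ht
      exact pow_ne_zero 2 (ne_of_gt (hu t ht))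
  have hcont' : ContinuousOn (fun t : ℝ => (1 - 2 * t) / (t * b + (1 - t) * a) ^ 2)
      (Set.Icc 0 1) := by
    apply ContinuousOn.div
    · exact (continuous_const.sub (continuous_const.mul continuous_id)).continuousOn
    · exact ((continuous_id.mul continuous_const).add
        ((continuous_const.sub continuous_id).mul continuous_const)).pow 2 |>.continuousOn
    · intro t ht
      exact pow_ne_zero 2 (ne_of_gt (hu t ht))
  have hsub1 : Set.uIcc (0:ℝ) (1/2) ⊆ Set.Icc (0:ℝ) 1 := by
    rw [Set.uIcc_of_le (by norm_num : (0:ℝ) ≤ 1/2)]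
    exact Set.Icc_subset_Icc le_rfl (by norm_num)
  have hsub2 : Set.uIcc (1/2:ℝ) 1 ⊆ Set.Icc (0:ℝ) 1 := by
    rw [Set.uIcc_of_le (by norm_num : (1/2:ℝ) ≤ 1)]
    exact Set.Icc_subset_Icc (by norm_num) le_rfl
  have hint1 : IntervalIntegrable (fun t : ℝ => |1 - 2 * t| / (t * b + (1 - t) * a) ^ 2)
      volume 0 (1/2) := (hcont.mono hsub1).intervalIntegrable
  have hint2 : IntervalIntegrable (fun t : ℝ => |1 - 2 * t| / (t * b + (1 - t) * a) ^ 2)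
      volume (1/2) 1 := (hcont.mono hsub2).intervalIntegrable
  rw [← integral_add_adjacent_intervals hint1 hint2]
  have e1 : ∫ t in (0:ℝ)..(1/2), |1 - 2 * t| / (t * b + (1 - t) * a) ^ 2
      = F (1/2) - F 0 := by
    rw [integral_congr (g := fun t : ℝ => (1 - 2 * t) / (t * b + (1 - t) * a) ^ 2)]
    · exact integral_eq_sub_of_hasDerivAt (fun t ht => hFderiv t (hsub1 ht))
        (hcont'.mono hsub1).intervalIntegrable
    · intro t ht
      rw [Set.uIcc_of_le (by norm_num : (0:ℝ) ≤ 1/2)] at ht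
      have : (0:ℝ) ≤ 1 - 2 * t := by
        obtain ⟨h0, h1⟩ := ht; linarith
      simp [abs_of_nonneg this]
  have e2 : ∫ t in (1/2:ℝ)..1, |1 - 2 * t| / (t * b + (1 - t) * a) ^ 2
      = (-F 1) - (-F (1/2)) := by
    rw [integral_congr (g := fun t : ℝ => -((1 - 2 * t) / (t * b + (1 - t) * a) ^ 2))]
    · have hder : ∀ t ∈ Set.uIcc (1/2:ℝ) 1,
          HasDerivAt (fun t => -F t) (-((1 - 2 * t) / (t * b + (1 - t) * a) ^ 2)) t :=
        fun t ht => (hFderiv t (hsub2 ht)).neg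
      exact integral_eq_sub_of_hasDerivAt hder
        ((hcont'.mono hsub2).neg).intervalIntegrable
    · intro t ht
      rw [Set.uIcc_of_le (by norm_num : (1/2:ℝ) ≤ 1)] at ht
      have : 1 - 2 * t ≤ 0 := by
        obtain ⟨h0, h1⟩ := ht; linarith
      simp only [abs_of_nonpos this, neg_div]
  rw [e1, e2]
  have u0 : (0:ℝ) * b + (1 - 0) * a = a := by ring
  have uh : (1/2:ℝ) * b + (1 - 1/2) * a = (a + b) / 2 := by ring
  have u1 : (1:ℝ) * b + (1 - 1) * a = b := by ring
  have hab' : (0:ℝ) < a + b := by linarith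
  have hlh : Real.log ((a + b) / 2) = Real.log (a + b) - Real.log 2 :=
    Real.log_div (ne_of_gt hab') two_ne_zero
  have hL : Real.log ((a + b) ^ 2 / (4 * a * b))
      = 2 * Real.log (a + b) - 2 * Real.log 2 - Real.log a - Real.log b := by
    rw [Real.log_div (by positivity) (by positivity), Real.log_pow,
      Real.log_mul (by positivity) (ne_of_gt hb),
      Real.log_mul (by norm_num) (ne_of_gt ha),
      show (4:ℝ) = 2 ^ 2 by norm_num, Real.log_pow]
    push_cast; ring
  simp only [hF, u0, uh, u1, hlh, hL]
  have hA : a ≠ 0 := ne_of_gt ha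
  have hB : b ≠ 0 := ne_of_gt hb
  have hAB : a + b ≠ 0 := ne_of_gt hab'
  field_simp
  ring
end
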